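/- arXiv:2509.19901 — 7 statements merged into one kernel-verified Lean document; each statement's English description precedes it below -/
import Mathlib

section
/- Let X be a finite nonempty index set and for each x ∈ X let D_x : Δ_K → ℝ be continuous and concave. Define F(p,μ) = Σ_{x∈X} μ_x D_x(p) for (p,μ) ∈ Δ_K × Δ_X. Then F admits a saddle point: there exists (p*,μ*) ∈ Δ_K × Δ_X such that F(p,μ*) ≤ F(p*,μ*) ≤ F(p*,μ) for all p ∈ Δ_K and μ ∈ Δ_X; consequently sup_{p∈Δ_K} inf_{μ∈Δ_X} F(p,μ) = inf_{μ∈Δ_X} sup_{p∈Δ_K} F(p,μ), and both are attained. -/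
/-!
Let `p*` maximize `p ↦ min_x D_x p` on `Δ_K` and let `v` be the maximum, so every `p ∈ Δ_K` has
some `D_x p ≤ v`. The strict hypograph `{y | ∃ p, ∀ x, y_x < D_x p}` is open and convex (by
concavity of the `D_x`) and misses the constant vector `v`; a separating functional has nonnegative
coefficients, and normalizing them gives `μ* ∈ Δ_X` with `F p μ* ≤ v ≤ F p* μ` for all `p`, `μ`.
A saddle point makes sup-inf and inf-sup both equal to its value.
-/

open Finset

lemma LinearMap.apply_eq_sum_mul_apply_single {X : Type*} [Fintype X] [DecidableEq X]
    (f : (X → ℝ) →ₗ[ℝ] ℝ) (y : X → ℝ) : f y = ∑ x, y x * f (Pi.single x 1) := by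
  conv_lhs => rw [← univ_sum_single y]
  simp only [map_sum]
  refine sum_congr rfl fun x _ => ?_
  rw [← smul_eq_mul, ← map_smul, ← Pi.single_smul', smul_eq_mul, mul_one]

lemma nonneg_of_forall_sub_mul_lt {a b c : ℝ} (h : ∀ t ≥ 0, a - t * b < c) : 0 ≤ b := by
  by_contra! hb
  have hca : 0 < c - a := by linarith [h 0 le_rfl]
  have := h ((c - a) / -b) (div_nonneg hca.le (neg_nonneg.2 hb.le))
  rw [div_mul_eq_mul_div, div_neg, mul_div_cancel_right₀ _ hb.ne] at this
  linarith

lemma le_of_forall_pos_sub_mul_lt {a b c : ℝ} (hb : 0 < b) (h : ∀ t > 0, a - t * b < c) :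
    a ≤ c :=
  le_of_forall_pos_lt_add fun ε hε => by
    have := h (ε / b) (div_pos hε hb)
    rw [div_mul_cancel₀ _ hb.ne'] at this
    linarith

section StrictHypograph

variable {E X : Type*} {S : Set E} {g : X → E → ℝ}

lemma isOpen_setOf_exists_forall_lt [Finite X] :
    IsOpen {y : X → ℝ | ∃ p ∈ S, ∀ x, y x < g x p} := by
  have : {y : X → ℝ | ∃ p ∈ S, ∀ x, y x < g x p} =
      ⋃ p ∈ S, Set.univ.pi fun x => Set.Iio (g x p) := by
    ext y; simp
  rw [this]
  exact isOpen_biUnion fun p _ => isOpen_set_pi Set.finite_univ fun x _ => isOpen_Iio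

lemma convex_setOf_exists_forall_lt [AddCommGroup E] [Module ℝ E] (hS : Convex ℝ S)
    (hg : ∀ x, ConcaveOn ℝ S (g x)) : Convex ℝ {y : X → ℝ | ∃ p ∈ S, ∀ x, y x < g x p} := by
  rintro y₁ ⟨p₁, hp₁, hy₁⟩ y₂ ⟨p₂, hp₂, hy₂⟩ a b ha hb hab
  refine ⟨a • p₁ + b • p₂, hS hp₁ hp₂ ha hb hab, fun x => ?_⟩
  calc (a • y₁ + b • y₂) x = a * y₁ x + b * y₂ x := rfl
    _ < a * g x p₁ + b * g x p₂ := by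
      rcases ha.lt_or_eq with ha | rfl
      · nlinarith [hy₁ x, hy₂ x]
      · simp only [zero_add] at hab
        subst hab
        simpa using hy₂ x
    _ ≤ g x (a • p₁ + b • p₂) := (hg x).2 hp₁ hp₂ ha hb hab

end StrictHypograph

theorem exists_mem_stdSimplex_forall_sum_mul_le {E X : Type*} [AddCommGroup E] [Module ℝ E]
    [Fintype X] {S : Set E} {D : X → E → ℝ} {v : ℝ} (hS : S.Nonempty)
    (hD : ∀ x, ConcaveOn ℝ S (D x)) (hv : ∀ p ∈ S, ∃ x, D x p ≤ v) :
    ∃ μ ∈ stdSimplex ℝ X, ∀ p ∈ S, ∑ x, μ x * D x p ≤ v := by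
  classical
  obtain ⟨p₀, hp₀⟩ := hS
  obtain ⟨x₀, -⟩ := hv p₀ hp₀
  set H := {y : X → ℝ | ∃ p ∈ S, ∀ x, y x < D x p}
  have hvH : v • (1 : X → ℝ) ∉ H := fun ⟨p, hp, hlt⟩ =>
    let ⟨x, hx⟩ := hv p hp
    (hlt x).not_ge (by simpa using hx)
  obtain ⟨f, hf⟩ := geometric_hahn_banach_open_point
    (convex_setOf_exists_forall_lt (hD x₀).1 hD) isOpen_setOf_exists_forall_lt hvH
  set w : X → ℝ := fun x => f (Pi.single x 1)
  have hf_eq : ∀ y, f y = ∑ x, y x * w x := f.toLinearMap.apply_eq_sum_mul_apply_single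
  have hf_one : f 1 = ∑ x, w x := by simp [hf_eq]
  set a₀ : X → ℝ := fun x => D x p₀ - 1
  have ha₀ : a₀ ∈ H := ⟨p₀, hp₀, fun x => sub_one_lt _⟩
  -- `H` is downward closed, so `f` is bounded above along every ray pointing down a coordinate.
  have hw : ∀ x, 0 ≤ w x := fun x => nonneg_of_forall_sub_mul_lt fun t ht => by
    have hmem : a₀ - t • Pi.single x 1 ∈ H := ⟨p₀, hp₀, fun x' => by
      have : 0 ≤ t * (Pi.single x 1 : X → ℝ) x' :=
        mul_nonneg ht (by rw [Pi.single_apply]; positivity)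
      simp only [Pi.sub_apply, Pi.smul_apply, smul_eq_mul, a₀]
      linarith⟩
    simpa only [map_sub, map_smul, smul_eq_mul] using hf _ hmem
  have hσ : 0 < f 1 := by
    rw [hf_one]
    refine (sum_nonneg fun x _ => hw x).lt_of_ne fun hσ => ?_
    have hw0 : ∀ x, w x = 0 := fun x =>
      (sum_eq_zero_iff_of_nonneg fun x _ => hw x).1 hσ.symm x (mem_univ x)
    simpa [hf_eq, hw0] using hf a₀ ha₀
  have hfD : ∀ p ∈ S, f (fun x => D x p) ≤ v * f 1 := fun p hp =>
    le_of_forall_pos_sub_mul_lt hσ fun t ht => by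
      have hmem : (fun x => D x p) - t • 1 ∈ H := ⟨p, hp, fun x => by simpa using ht⟩
      simpa only [map_sub, map_smul, smul_eq_mul] using hf _ hmem
  refine ⟨fun x => w x / f 1, ⟨fun x => div_nonneg (hw x) hσ.le, ?_⟩, fun p hp => ?_⟩
  · rw [← sum_div, hf_one, div_self (hf_one ▸ hσ.ne')]
  · calc ∑ x, w x / f 1 * D x p = f (fun x => D x p) / f 1 := by
          rw [hf_eq (fun x => D x p), sum_div]
          exact sum_congr rfl fun x _ => by ring
      _ ≤ v := (div_le_iff₀ hσ).2 (hfD p hp)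

lemma le_sum_mul_of_mem_stdSimplex {𝕜 X : Type*} [Semiring 𝕜] [PartialOrder 𝕜]
    [IsOrderedRing 𝕜] [Fintype X] {μ a : X → 𝕜} {c : 𝕜} (hμ : μ ∈ stdSimplex 𝕜 X)
    (h : ∀ x, c ≤ a x) : c ≤ ∑ x, μ x * a x :=
  calc c = ∑ x, μ x * c := by rw [← sum_mul, hμ.2, one_mul]
    _ ≤ ∑ x, μ x * a x := sum_le_sum fun x _ => mul_le_mul_of_nonneg_left (h x) (hμ.1 x)

section Saddle

variable {α β γ : Type*} [ConditionallyCompleteLattice γ] {A : Set α} {B : Set β}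
  {F : α → β → γ} {p₀ : α} {μ₀ : β}

lemma ciSup_ciInf_eq_of_saddle (hp₀ : p₀ ∈ A) (hμ₀ : μ₀ ∈ B)
    (hmax : ∀ p ∈ A, F p μ₀ ≤ F p₀ μ₀) (hmin : ∀ μ ∈ B, F p₀ μ₀ ≤ F p₀ μ)
    (hbdd : ∀ p ∈ A, BddBelow (F p '' B)) :
    (⨅ μ : B, F p₀ μ) = F p₀ μ₀ ∧ (⨆ p : A, ⨅ μ : B, F p μ) = F p₀ μ₀ := by
  have : Nonempty A := ⟨⟨p₀, hp₀⟩⟩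
  have : Nonempty B := ⟨⟨μ₀, hμ₀⟩⟩
  have hinf_le : ∀ p ∈ A, (⨅ μ : B, F p μ) ≤ F p₀ μ₀ := fun p hp =>
    (ciInf_le (Set.image_eq_range (F p) B ▸ hbdd p hp) ⟨μ₀, hμ₀⟩).trans (hmax p hp)
  have hinf : (⨅ μ : B, F p₀ μ) = F p₀ μ₀ :=
    (hinf_le p₀ hp₀).antisymm (le_ciInf fun μ => hmin μ μ.2)
  refine ⟨hinf, (ciSup_le fun p : A => hinf_le p p.2).antisymm ?_⟩
  exact hinf ▸ le_ciSup ⟨F p₀ μ₀, Set.forall_mem_range.2 fun p : A => hinf_le p p.2⟩ ⟨p₀, hp₀⟩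

lemma ciInf_ciSup_eq_of_saddle (hp₀ : p₀ ∈ A) (hμ₀ : μ₀ ∈ B)
    (hmax : ∀ p ∈ A, F p μ₀ ≤ F p₀ μ₀) (hmin : ∀ μ ∈ B, F p₀ μ₀ ≤ F p₀ μ)
    (hbdd : ∀ μ ∈ B, BddAbove ((F · μ) '' A)) :
    (⨆ p : A, F p μ₀) = F p₀ μ₀ ∧ (⨅ μ : B, ⨆ p : A, F p μ) = F p₀ μ₀ :=
  ciSup_ciInf_eq_of_saddle (γ := γᵒᵈ) (F := fun μ p => OrderDual.toDual (F p μ)) hμ₀ hp₀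
    hmin hmax hbdd

end Saddle

/-- For a finite nonempty index set `X` and continuous concave functions
`D x : Δ_K → ℝ`, the payoff `F p μ = ∑ x, μ x * D x p` admits a saddle point on
`Δ_K × Δ_X`; consequently the sup-inf and inf-sup values coincide and both are attained. -/
theorem stmt_0 {K : ℕ} (hK : 0 < K) {X : Type*} [Fintype X] [Nonempty X]
    (D : X → (Fin K → ℝ) → ℝ)
    (hcont : ∀ x, ContinuousOn (D x) (stdSimplex ℝ (Fin K)))
    (hconc : ∀ x, ConcaveOn ℝ (stdSimplex ℝ (Fin K)) (D x))
    (F : (Fin K → ℝ) → (X → ℝ) → ℝ)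
    (hF : ∀ p μ, F p μ = ∑ x, μ x * D x p) :
    ∃ pstar ∈ stdSimplex ℝ (Fin K), ∃ mustar ∈ stdSimplex ℝ X,
      (∀ p ∈ stdSimplex ℝ (Fin K), F p mustar ≤ F pstar mustar) ∧
      (∀ μ ∈ stdSimplex ℝ X, F pstar mustar ≤ F pstar μ) ∧
      (⨆ p : stdSimplex ℝ (Fin K), ⨅ μ : stdSimplex ℝ X, F p.1 μ.1)
        = (⨅ μ : stdSimplex ℝ X, ⨆ p : stdSimplex ℝ (Fin K), F p.1 μ.1) ∧
      (⨅ μ : stdSimplex ℝ X, F pstar μ.1)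
        = (⨆ p : stdSimplex ℝ (Fin K), ⨅ μ : stdSimplex ℝ X, F p.1 μ.1) ∧
      (⨆ p : stdSimplex ℝ (Fin K), F p.1 mustar)
        = (⨅ μ : stdSimplex ℝ X, ⨆ p : stdSimplex ℝ (Fin K), F p.1 μ.1) := by
  have hS : (stdSimplex ℝ (Fin K)).Nonempty := ⟨Pi.single ⟨0, hK⟩ 1, single_mem_stdSimplex ℝ _⟩
  obtain ⟨pstar, hpstar, hmax⟩ := (isCompact_stdSimplex ℝ _).exists_isMaxOn hS
    (ContinuousOn.finset_inf'_apply univ_nonempty fun x _ => hcont x)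
  set v := univ.inf' univ_nonempty fun x => D x pstar
  have hv : ∀ p ∈ stdSimplex ℝ (Fin K), ∃ x, D x p ≤ v := fun p hp =>
    let ⟨x, _, hx⟩ := exists_mem_eq_inf' univ_nonempty (D · p)
    ⟨x, hx ▸ hmax hp⟩
  obtain ⟨mustar, hmustar, hle⟩ := exists_mem_stdSimplex_forall_sum_mul_le hS hconc hv
  have hge : ∀ μ ∈ stdSimplex ℝ X, v ≤ F pstar μ := fun μ hμ =>
    hF pstar μ ▸ le_sum_mul_of_mem_stdSimplex hμ fun x => inf'_le _ (mem_univ x)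
  have hsaddle_max : ∀ p ∈ stdSimplex ℝ (Fin K), F p mustar ≤ F pstar mustar := fun p hp =>
    (hF p mustar ▸ hle p hp).trans (hge mustar hmustar)
  have hsaddle_min : ∀ μ ∈ stdSimplex ℝ X, F pstar mustar ≤ F pstar μ := fun μ hμ =>
    (hF pstar mustar ▸ hle pstar hpstar).trans (hge μ hμ)
  obtain ⟨hinf, hsupinf⟩ := ciSup_ciInf_eq_of_saddle hpstar hmustar hsaddle_max hsaddle_min
    fun p _ => (isCompact_stdSimplex ℝ X).bddBelow_image <| by
      rw [funext (hF p)]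
      fun_prop
  obtain ⟨hsup, hinfsup⟩ := ciInf_ciSup_eq_of_saddle hpstar hmustar hsaddle_max hsaddle_min
    fun μ _ => (isCompact_stdSimplex ℝ _).bddAbove_image <| by
      simp only [hF]
      exact continuousOn_finsetSum _ fun x _ => continuousOn_const.mul (hcont x)
  exact ⟨pstar, hpstar, mustar, hmustar, hsaddle_max, hsaddle_min, hsupinf.trans hinfsup.symm,
    hinf.trans hsupinf.symm, hsup.trans hinfsup.symm⟩
end

section
/- Let X be a finite nonempty index set and for each x ∈ X let D_x : ℝ^K_{≥0} → ℝ be continuous, concave, and positively homogeneous of degree one (D_x(λp) = λ D_x(p) for all λ > 0 and p in the nonnegative orthant). Define F(p,μ) = Σ_{x∈X} μ_x D_x(p). Let p* ∈ Δ_K, μ* ∈ Δ_X, and suppose each D_x is (Fréchet) differentiable at p* with gradient ∇D_x(p*); set g = Σ_x μ*_x ∇D_x(p*) and v = F(p*,μ*). Then (p*,μ*) is a saddle point of F on Δ_K × Δ_X (i.e., F(p,μ*) ≤ v ≤ F(p*,μ) for all p ∈ Δ_K, μ ∈ Δ_X) if and only if the KKT complementary-slackness conditions hold: D_x(p*) ≥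 v for all x ∈ X with μ*_x (D_x(p*) − v) = 0 for all x, and g_i ≤ v for all i ∈ {1,…,K} with p*_i (v − g_i) = 0 for all i. -/
/-!
Minimising the linear function `μ ↦ F(p*, μ)` over `Δ_X` at `μ*` means that every vertex value
`D_x(p*)` is at least `v`, with equality on the support of `μ*`. The function `p ↦ F(p, μ*)` is
concave and differentiable at `p*`, so `p*` maximises it over `Δ_K` iff the derivative does not
increase towards any vertex: `∇F(p*)·eᵢ ≤ ∇F(p*)·p*`. Euler's identity for the one-homogeneous
`F(·, μ*)` gives `∇F(p*)·p* = F(p*, μ*) = v`, so this reads `gᵢ ≤ v`, and since `p*` averages `g`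
to `v`, complementary slackness follows as on the `μ` side.
-/

open Set

section

variable {E : Type*} [NormedAddCommGroup E] [NormedSpace ℝ E]

theorem ConcaveOn.le_add_of_hasFDerivAt {s : Set E} {f : E → ℝ} {f' : E →L[ℝ] ℝ} {a b : E}
    (hf : ConcaveOn ℝ s f) (ha : a ∈ s) (hb : b ∈ s) (hf' : HasFDerivAt f f' a) :
    f b ≤ f a + f' (b - a) := by
  -- concavity makes `0` a minimum of `φ` on `[0, 1]`, so Fermat's rule gives `φ'(0) ≥ 0`
  set φ : ℝ → ℝ := fun t ↦ f (a + t • (b - a)) - t * (f b - f a)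
  have hmin : IsMinOn φ (Icc 0 1) 0 := by
    intro t ⟨ht₀, ht₁⟩
    have hline : a + t • (b - a) = (1 - t) • a + t • b := by
      rw [smul_sub, sub_smul, one_smul]; abel
    have := hf.2 ha hb (sub_nonneg.2 ht₁) ht₀ (by ring)
    simp only [smul_eq_mul] at this
    simp only [φ, hline, zero_smul, add_zero, zero_mul, sub_zero, mem_ofPred_eq]
    nlinarith
  have hφ : HasDerivAt φ (f' (b - a) - (f b - f a)) 0 := by
    have hline : HasDerivAt (fun t : ℝ ↦ a + t • (b - a)) (b - a) 0 := by
      simpa using ((hasDerivAt_id (0 : ℝ)).smul_const (b - a)).const_add a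
    have hf'' : HasFDerivAt f f' (a + (0 : ℝ) • (b - a)) := by simpa using hf'
    exact ((hf''.comp_hasDerivAt 0 hline).sub
      ((hasDerivAt_id (0 : ℝ)).mul_const (f b - f a))).congr_deriv (by rw [one_mul])
  have := hmin.localize.hasFDerivWithinAt_nonneg hφ.hasFDerivAt.hasFDerivWithinAt
    (y := 1) (mem_posTangentConeAt_of_segment_subset (by simp [segment_eq_Icc]))
  rw [ContinuousLinearMap.toSpanSingleton_apply, one_smul] at this
  linarith

theorem HasFDerivAt.apply_self_eq_of_homogeneous {f : E → ℝ} {f' : E →L[ℝ] ℝ} {a : E}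
    (hf : HasFDerivAt f f' a) (hhom : ∀ c : ℝ, 0 < c → f (c • a) = c * f a) : f' a = f a := by
  have hf₁ : HasFDerivAt f f' ((1 : ℝ) • a) := by simpa using hf
  have hray : HasDerivAt (fun c : ℝ ↦ f (c • a)) (f' a) 1 :=
    (hf₁.comp_hasDerivAt 1 ((hasDerivAt_id (1 : ℝ)).smul_const a)).congr_deriv
      (by rw [one_smul])
  have hlin : HasDerivAt (fun c : ℝ ↦ f (c • a)) (f a) 1 := by
    refine ((hasDerivAt_id (1 : ℝ)).mul_const (f a)).congr_of_eventuallyEq ?_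
      |>.congr_deriv (one_mul _)
    filter_upwards [Ioi_mem_nhds one_pos] with c hc using hhom c hc
  exact hray.unique hlin

end

section Simplex

variable {ι : Type*} [Fintype ι] {w a : ι → ℝ} {v : ℝ}

theorem le_sum_mul_of_mem_stdSimplex_s1 (hw : w ∈ stdSimplex ℝ ι) (h : ∀ i, v ≤ a i) :
    v ≤ ∑ i, w i * a i :=
  calc v = ∑ i, w i * v := by rw [← Finset.sum_mul, hw.2, one_mul]
    _ ≤ ∑ i, w i * a i := Finset.sum_le_sum fun i _ ↦ mul_le_mul_of_nonneg_left (h i) (hw.1 i)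

theorem sum_mul_le_of_mem_stdSimplex (hw : w ∈ stdSimplex ℝ ι) (h : ∀ i, a i ≤ v) :
    ∑ i, w i * a i ≤ v :=
  calc ∑ i, w i * a i ≤ ∑ i, w i * v :=
        Finset.sum_le_sum fun i _ ↦ mul_le_mul_of_nonneg_left (h i) (hw.1 i)
    _ = v := by rw [← Finset.sum_mul, hw.2, one_mul]

theorem forall_stdSimplex_le_sum_mul_iff [DecidableEq ι] :
    (∀ w ∈ stdSimplex ℝ ι, v ≤ ∑ i, w i * a i) ↔ ∀ i, v ≤ a i :=
  ⟨fun h i ↦ by simpa [Pi.single_apply] using h _ (single_mem_stdSimplex ℝ i),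
    fun h _ hw ↦ le_sum_mul_of_mem_stdSimplex_s1 hw h⟩

theorem mul_sub_eq_zero_of_mem_stdSimplex (hw : w ∈ stdSimplex ℝ ι) (h : ∀ i, v ≤ a i)
    (hv : ∑ i, w i * a i = v) (i : ι) : w i * (a i - v) = 0 := by
  have hsum : ∑ j, w j * (a j - v) = 0 := by
    simp only [mul_sub, Finset.sum_sub_distrib, ← Finset.sum_mul, hw.2, one_mul, hv, sub_self]
  exact (Finset.sum_eq_zero_iff_of_nonneg fun j _ ↦ mul_nonneg (hw.1 j) (sub_nonneg.2 (h j))).1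
    hsum i (Finset.mem_univ i)

end Simplex

theorem ConcaveOn.sum_mul {ι E : Type*} [AddCommGroup E] [Module ℝ E] {s : Finset ι} {t : Set E}
    {w : ι → ℝ} {f : ι → E → ℝ} (ht : Convex ℝ t) (hw : ∀ i ∈ s, 0 ≤ w i)
    (hf : ∀ i ∈ s, ConcaveOn ℝ t (f i)) : ConcaveOn ℝ t fun x ↦ ∑ i ∈ s, w i * f i x := by
  have := Finset.sum_induction (fun i ↦ w i • f i) (ConcaveOn ℝ t) (fun _ _ ↦ ConcaveOn.add)
    (concaveOn_const 0 ht) fun i hi ↦ (hf i hi).smul (hw i hi)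
  simpa only [Finset.sum_fn, Pi.smul_apply, smul_eq_mul] using this

theorem ConcaveOn.isMaxOn_stdSimplex_iff {ι : Type*} [Fintype ι] [DecidableEq ι]
    {f : (ι → ℝ) → ℝ} {f' : (ι → ℝ) →L[ℝ] ℝ} {a : ι → ℝ}
    (hf : ConcaveOn ℝ (stdSimplex ℝ ι) f) (ha : a ∈ stdSimplex ℝ ι) (hf' : HasFDerivAt f f' a) :
    IsMaxOn f (stdSimplex ℝ ι) a ↔ ∀ i, f' (Pi.single i 1) ≤ f' a := by
  constructor
  · intro hmax i
    have := hmax.localize.hasFDerivWithinAt_nonpos hf'.hasFDerivWithinAt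
      (sub_mem_posTangentConeAt_of_segment_subset
        ((convex_stdSimplex ℝ ι).segment_subset ha (single_mem_stdSimplex ℝ i)))
    rwa [map_sub, sub_nonpos] at this
  · intro hvert b hb
    have hb' : f' b = ∑ i, b i * f' (Pi.single i 1) := by
      conv_lhs => rw [← Finset.univ_sum_single b]
      refine (map_sum f' _ _).trans (Finset.sum_congr rfl fun i _ ↦ ?_)
      rw [← smul_eq_mul, ← map_smul, ← Pi.single_smul', smul_eq_mul, mul_one]
    have htangent := hf.le_add_of_hasFDerivAt ha hb hf'
    rw [map_sub, hb'] at htangent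
    have := sum_mul_le_of_mem_stdSimplex hb hvert
    show f b ≤ f a
    linarith

theorem stmt_1_general {K : ℕ} {X : Type*} [Fintype X]
    (D : X → (Fin K → ℝ) → ℝ)
    (hconc : ∀ x, ConcaveOn ℝ {p : Fin K → ℝ | ∀ i, 0 ≤ p i} (D x))
    (hhom : ∀ x, ∀ c : ℝ, 0 < c → ∀ p : Fin K → ℝ, (∀ i, 0 ≤ p i) →
      D x (c • p) = c * D x p)
    (pstar : Fin K → ℝ) (hp : pstar ∈ stdSimplex ℝ (Fin K))
    (mustar : X → ℝ) (hmu : mustar ∈ stdSimplex ℝ X)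
    (gradD : X → Fin K → ℝ)
    (hgrad : ∀ x, ∃ L : (Fin K → ℝ) →L[ℝ] ℝ, HasFDerivAt (D x) L pstar ∧
      ∀ w, L w = ∑ i, gradD x i * w i)
    (g : Fin K → ℝ) (hg : g = fun i => ∑ x, mustar x * gradD x i)
    (v : ℝ) (hv : v = ∑ x, mustar x * D x pstar) :
    ((∀ p ∈ stdSimplex ℝ (Fin K), ∑ x, mustar x * D x p ≤ v) ∧
      (∀ μ ∈ stdSimplex ℝ X, v ≤ ∑ x, μ x * D x pstar))
    ↔
    ((∀ x, v ≤ D x pstar) ∧ (∀ x, mustar x * (D x pstar - v) = 0) ∧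
      (∀ i, g i ≤ v) ∧ (∀ i, pstar i * (v - g i) = 0)) := by
  classical
  choose L hL hLg using hgrad
  set F : (Fin K → ℝ) → ℝ := fun p ↦ ∑ x, mustar x * D x p
  set LF : (Fin K → ℝ) →L[ℝ] ℝ := ∑ x, mustar x • L x
  have hF : HasFDerivAt F LF pstar := HasFDerivAt.fun_sum fun x _ ↦ (hL x).const_mul (mustar x)
  have hLF : ∀ w, LF w = ∑ i, g i * w i := fun w ↦ by
    simp only [LF, _root_.sum_apply, _root_.smul_apply, smul_eq_mul,
      hLg, hg, Finset.mul_sum, Finset.sum_mul]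
    rw [Finset.sum_comm]
    exact Finset.sum_congr rfl fun _ _ ↦ Finset.sum_congr rfl fun _ _ ↦ by ring
  have hFconc : ConcaveOn ℝ (stdSimplex ℝ (Fin K)) F :=
    ConcaveOn.sum_mul (convex_stdSimplex ℝ _) (fun x _ ↦ hmu.1 x)
      fun x _ ↦ (hconc x).subset (fun _ hq ↦ hq.1) (convex_stdSimplex ℝ _)
  have hLFp : LF pstar = v := by
    rw [hv, hF.apply_self_eq_of_homogeneous fun c hc ↦ ?_]
    simp only [F, hhom _ c hc pstar hp.1, Finset.mul_sum, mul_left_comm]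
  have hvert : ∀ i, LF (Pi.single i 1) = g i := fun i ↦ by simp [hLF, Pi.single_apply]
  have hpside : (∀ p ∈ stdSimplex ℝ (Fin K), F p ≤ v) ↔ ∀ i, g i ≤ v := by
    have := hFconc.isMaxOn_stdSimplex_iff hp hF
    simp only [hvert, hLFp] at this
    rwa [isMaxOn_iff, show F pstar = v from hv.symm] at this
  rw [hpside, forall_stdSimplex_le_sum_mul_iff]
  constructor
  · rintro ⟨hgv, hvD⟩
    refine ⟨hvD, mul_sub_eq_zero_of_mem_stdSimplex hmu hvD hv.symm, hgv, fun i ↦ ?_⟩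
    have := mul_sub_eq_zero_of_mem_stdSimplex hp (a := -g) (v := -v) (by simpa using hgv)
      (by simp only [Pi.neg_apply, mul_neg, Finset.sum_neg_distrib, ← hLFp, hLF, mul_comm]) i
    rwa [Pi.neg_apply, neg_sub_neg] at this
  · rintro ⟨hvD, -, hgv, -⟩
    exact ⟨hgv, hvD⟩

/-- For continuous, concave, positively one-homogeneous `D x` on the
nonnegative orthant, differentiable at `p*` with gradients `gradD x`, the pair
`(p*, μ*)` is a saddle point of `F(p,μ) = ∑ x, μ x * D x p` on `Δ_K × Δ_X` if and only if
the KKT complementary-slackness conditions hold, where `g = ∑ x, μ* x • ∇D x (p*)` and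
`v = F(p*, μ*)`. -/
theorem stmt_1 {K : ℕ} {X : Type*} [Fintype X] [Nonempty X]
    (D : X → (Fin K → ℝ) → ℝ)
    (hcont : ∀ x, ContinuousOn (D x) {p : Fin K → ℝ | ∀ i, 0 ≤ p i})
    (hconc : ∀ x, ConcaveOn ℝ {p : Fin K → ℝ | ∀ i, 0 ≤ p i} (D x))
    (hhom : ∀ x, ∀ c : ℝ, 0 < c → ∀ p : Fin K → ℝ, (∀ i, 0 ≤ p i) →
      D x (c • p) = c * D x p)
    (pstar : Fin K → ℝ) (hp : pstar ∈ stdSimplex ℝ (Fin K))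
    (mustar : X → ℝ) (hmu : mustar ∈ stdSimplex ℝ X)
    (gradD : X → Fin K → ℝ)
    (hgrad : ∀ x, ∃ L : (Fin K → ℝ) →L[ℝ] ℝ, HasFDerivAt (D x) L pstar ∧
      ∀ w, L w = ∑ i, gradD x i * w i)
    (g : Fin K → ℝ) (hg : g = fun i => ∑ x, mustar x * gradD x i)
    (v : ℝ) (hv : v = ∑ x, mustar x * D x pstar) :
    ((∀ p ∈ stdSimplex ℝ (Fin K), ∑ x, mustar x * D x p ≤ v) ∧
      (∀ μ ∈ stdSimplex ℝ X, v ≤ ∑ x, μ x * D x pstar))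
    ↔
    ((∀ x, v ≤ D x pstar) ∧ (∀ x, mustar x * (D x pstar - v) = 0) ∧
      (∀ i, g i ≤ v) ∧ (∀ i, pstar i * (v - g i) = 0)) :=
  stmt_1_general D hconc hhom pstar hp mustar hmu gradD hgrad g hg v hv
end

section
/- Let X be a finite nonempty index set and U ⊆ ℝ^K × ℝ^X an open set on which F is twice continuously differentiable; suppose F(·,μ) is concave on Δ_K for every μ ∈ Δ_X and F(p,·) is convex on Δ_X for every p ∈ Δ_K. Let (p(·),μ(·)) : [0,∞) → Δ_K × Δ_X be absolutely continuous with (p(t),μ(t)) ∈ U for all t, and suppose for almost every t ≥ 0: ṗ(t) = q(t) − p(t) where q(t) ∈ Δ_K satisfies q(t)ᵀ∇_p F(p(t),μ(t)) = max_{q'∈Δ_K} q'ᵀ∇_p F(p(t),μ(t)), and μ̇(t) = ν(t) − μ(t) where ν(t) ∈ Δ_X satisfies ν(t)ᵀ∇_μ F(p(t),μ(t)) = min_{ν'∈Δ_X} ν'ᵀ∇_μ F(p(t),μ(t)). Define V(p,μ) = max_{q'∈Δ_K}(q'−p)ᵀ∇_p F(p,μ) − min_{ν'∈Δ_X}(ν'−μ)ᵀ∇_μ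 F(p,μ). Then V(p(t),μ(t)) ≤ V(p(0),μ(0)) e^{−t} for all t ≥ 0. -/
/-!
Write `V = A - B`, where `A(p, μ) = max_{a ∈ Δ} DF(p, μ)(a - p, 0)` and
`B(p, μ) = min_{b ∈ Δ} DF(p, μ)(0, b - μ)`. Along the trajectory both are Lipschitz, being a
max (min) of a family that is uniformly Lipschitz on a compact neighbourhood of the trajectory,
hence absolutely continuous. At almost every time the best responses `q`, `ν` attain the max and
the min, so by Danskin's envelope argument `Ȧ = D²F(ż, (q - p, 0)) - A` and
`Ḃ = D²F(ż, (0, ν - μ)) - B`. Since `ż = (q - p, 0) + (0, ν - μ)`, the mixed second derivatives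
cancel by symmetry of `D²F`, and
`V̇ = D²F((q - p, 0), (q - p, 0)) - D²F((0, ν - μ), (0, ν - μ)) - V ≤ -V`
by concavity in `p` and convexity in `μ`. Hence `e^t V` is nonincreasing.
-/

open MeasureTheory Set Filter Topology
open scoped NNReal

section Lipschitz

variable {α β : Type*} [PseudoMetricSpace α] [PseudoMetricSpace β] {g : α × β → ℝ} {K : ℝ≥0}
  {s : Set α} {c : Set β}

theorem LipschitzOnWith.ciSup_of_isCompact [Nonempty c] (hc : IsCompact c)
    (hg : LipschitzOnWith K g (s ×ˢ c)) : LipschitzOnWith K (fun x => ⨆ b : c, g (x, b)) s := by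
  have hbdd : ∀ y ∈ s, BddAbove (range fun b : c => g (y, b)) := fun y hy => by
    rw [← image_eq_range (fun b => g (y, b))]
    exact hc.bddAbove_image (hg.continuousOn.comp (Continuous.continuousOn (by fun_prop))
      fun b hb => mk_mem_prod hy hb)
  refine LipschitzOnWith.of_le_add_mul K fun x hx y hy => ciSup_le fun b => ?_
  calc g (x, b) ≤ g (y, b) + K * dist (x, (b : β)) (y, b) :=
        hg.le_add_mul (mk_mem_prod hx b.2) (mk_mem_prod hy b.2)
    _ ≤ (⨆ b : c, g (y, b)) + K * dist x y := by
        rw [Prod.dist_eq, dist_self, max_eq_left dist_nonneg]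
        gcongr
        exact le_ciSup (hbdd y hy) b

theorem LipschitzOnWith.ciInf_of_isCompact [Nonempty c] (hc : IsCompact c)
    (hg : LipschitzOnWith K g (s ×ˢ c)) : LipschitzOnWith K (fun x => ⨅ b : c, g (x, b)) s := by
  have hbdd : ∀ x ∈ s, BddBelow (range fun b : c => g (x, b)) := fun x hx => by
    rw [← image_eq_range (fun b => g (x, b))]
    exact hc.bddBelow_image (hg.continuousOn.comp (Continuous.continuousOn (by fun_prop))
      fun b hb => mk_mem_prod hx hb)
  refine LipschitzOnWith.of_le_add_mul K fun x hx y hy => ?_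
  rw [← sub_le_iff_le_add]
  refine le_ciInf fun b => ?_
  calc (⨅ b : c, g (x, b)) - K * dist x y ≤ g (x, b) - K * dist (x, (b : β)) (y, b) := by
        rw [Prod.dist_eq, dist_self, max_eq_left dist_nonneg]
        gcongr
        exact ciInf_le (hbdd x hx) b
    _ ≤ g (y, b) := by
        linarith [hg.le_add_mul (mk_mem_prod hx b.2) (mk_mem_prod hy b.2)]

end Lipschitz

theorem IsCompact.exists_lipschitzOnWith_of_contDiffAt {E F : Type*} [NormedAddCommGroup E]
    [NormedSpace ℝ E] [NormedAddCommGroup F] [NormedSpace ℝ F] {f : E → F} {k : Set E}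
    (hk : IsCompact k) (hf : ∀ x ∈ k, ContDiffAt ℝ 1 f x) : ∃ K, LipschitzOnWith K f k :=
  LocallyLipschitzOn.exists_lipschitzOnWith_of_compact hk fun x hx => by
    obtain ⟨K, t, ht, hKt⟩ := (hf x hx).exists_lipschitzOnWith
    exact ⟨K, t, mem_nhdsWithin_of_mem_nhds ht, hKt⟩

theorem HasDerivAt.eq_of_eventuallyLE_of_eq {f g : ℝ → ℝ} {f' g' x : ℝ} (hf : HasDerivAt f f' x)
    (hg : HasDerivAt g g' x) (hle : f ≤ᶠ[𝓝 x] g) (heq : f x = g x) : f' = g' := by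
  have hmin : IsLocalMin (g - f) x := by
    filter_upwards [hle] with y hy
    simp only [Pi.sub_apply, heq, sub_self]
    linarith
  linarith [hmin.hasDerivAt_eq_zero (hg.sub hf)]

theorem ConvexOn.comp_lineMap {E : Type*} [AddCommGroup E] [Module ℝ E] {f : E → ℝ} {s : Set E}
    {x y : E} (hf : ConvexOn ℝ s f) (hx : x ∈ s) (hy : y ∈ s) :
    ConvexOn ℝ (Icc (0 : ℝ) 1) (f ∘ AffineMap.lineMap x y) :=
  (hf.comp_affineMap _).subset (fun _ ht => hf.1.lineMap_mem hx hy ht) (convex_Icc 0 1)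

theorem ConcaveOn.comp_lineMap {E : Type*} [AddCommGroup E] [Module ℝ E] {f : E → ℝ} {s : Set E}
    {x y : E} (hf : ConcaveOn ℝ s f) (hx : x ∈ s) (hy : y ∈ s) :
    ConcaveOn ℝ (Icc (0 : ℝ) 1) (f ∘ AffineMap.lineMap x y) :=
  (hf.comp_affineMap _).subset (fun _ ht => hf.1.lineMap_mem hx hy ht) (convex_Icc 0 1)

theorem ConvexOn.second_deriv_lineMap_nonneg {E : Type*} [NormedAddCommGroup E] [NormedSpace ℝ E]
    {f : E → ℝ} {f' : E → E →L[ℝ] ℝ} {f'' : E →L[ℝ] E →L[ℝ] ℝ} {x y : E}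
    (hf : ConvexOn ℝ (Icc (0 : ℝ) 1) (f ∘ AffineMap.lineMap x y))
    (hf' : ∀ᶠ z in 𝓝 x, HasFDerivAt f (f' z) z) (hf'' : HasFDerivAt f' f'' x) :
    0 ≤ f'' (y - x) (y - x) := by
  set ℓ : ℝ → E := ⇑(AffineMap.lineMap (k := ℝ) x y)
  have hℓ0 : ℓ 0 = x := AffineMap.lineMap_apply_zero x y
  have hℓ : ∀ t, HasDerivAt ℓ (y - x) t := fun t => AffineMap.hasDerivAt_lineMap
  have hnear : ∀ᶠ t in 𝓝 (0 : ℝ), HasFDerivAt f (f' (ℓ t)) (ℓ t) :=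
    (hℓ 0).continuousAt.tendsto.eventually (hℓ0 ▸ hf')
  obtain ⟨ε, hε, hball⟩ := Metric.mem_nhds_iff.1 hnear
  set δ := min (ε / 2) 1
  have hδ : 0 < δ := by positivity
  have hS : Icc 0 δ ⊆ Icc 0 1 := Icc_subset_Icc_right (min_le_right _ _)
  have hφ : ∀ t ∈ Icc 0 δ, HasDerivAt (f ∘ ℓ) (f' (ℓ t) (y - x)) t := fun t ht => by
    have htε : t ∈ Metric.ball 0 ε := by
      rw [Metric.mem_ball, Real.dist_0_eq_abs, abs_of_nonneg ht.1]
      linarith [ht.2.trans (min_le_left _ _)]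
    exact (hball htε).comp_hasDerivAt t (hℓ t)
  have hmono : MonotoneOn (fun t => f' (ℓ t) (y - x)) (Icc 0 δ) := fun a ha b hb hab => by
    have := (hf.subset hS (convex_Icc 0 δ)).monotoneOn_deriv
      (fun t ht => (hφ t ht).differentiableAt) ha hb hab
    rwa [(hφ a ha).deriv, (hφ b hb).deriv] at this
  have hderiv : HasDerivAt (fun t => f' (ℓ t) (y - x)) (f'' (y - x) (y - x)) 0 := by
    have := ((hℓ0 ▸ hf'').comp_hasDerivAt 0 (hℓ 0)).clm_apply (hasDerivAt_const 0 (y - x))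
    simpa using this
  refine hderiv.hasDerivWithinAt.nonneg_of_monotoneOn ?_ hmono
  rw [accPt_principal_iff_nhdsWithin]
  exact (left_nhdsWithin_Ioo_neBot hδ).mono
    (nhdsWithin_mono _ fun t ht => ⟨Ioo_subset_Icc_self ht, ne_of_gt ht.1⟩)

theorem ConcaveOn.second_deriv_lineMap_nonpos {E : Type*} [NormedAddCommGroup E]
    [NormedSpace ℝ E] {f : E → ℝ} {f' : E → E →L[ℝ] ℝ} {f'' : E →L[ℝ] E →L[ℝ] ℝ} {x y : E}
    (hf : ConcaveOn ℝ (Icc (0 : ℝ) 1) (f ∘ AffineMap.lineMap x y))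
    (hf' : ∀ᶠ z in 𝓝 x, HasFDerivAt f (f' z) z) (hf'' : HasFDerivAt f' f'' x) :
    f'' (y - x) (y - x) ≤ 0 := by
  have := ConvexOn.second_deriv_lineMap_nonneg (f := -f) (f' := -f') hf.neg
    (hf'.mono fun z hz => hz.neg) hf''.neg
  simpa using this

theorem AbsolutelyContinuousOnInterval.le_of_ae_deriv_nonpos {f : ℝ → ℝ} {a b : ℝ} (hab : a ≤ b)
    (hf : AbsolutelyContinuousOnInterval f a b) (hd : ∀ᵐ x, x ∈ Ioo a b → deriv f x ≤ 0) :
    f b ≤ f a := by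
  have hd' : 0 ≤ᵐ[volume.restrict (Icc a b)] fun x => -deriv f x := by
    rw [EventuallyLE, ← ae_restrict_congr_set Ioo_ae_eq_Icc, ae_restrict_iff' measurableSet_Ioo]
    filter_upwards [hd] with x hx hxI using neg_nonneg.2 (hx hxI)
  have := intervalIntegral.integral_nonneg_of_ae_restrict hab hd'
  rw [intervalIntegral.integral_neg, hf.integral_deriv_eq_sub] at this
  linarith

theorem AbsolutelyContinuousOnInterval.le_mul_exp_neg {g : ℝ → ℝ} {T : ℝ} (hT : 0 ≤ T)
    (hg : AbsolutelyContinuousOnInterval g 0 T) (hd : ∀ᵐ t, t ∈ Ioo 0 T → deriv g t ≤ -g t) :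
    g T ≤ g 0 * Real.exp (-T) := by
  have hexp : AbsolutelyContinuousOnInterval Real.exp 0 T :=
    Real.contDiff_exp.contDiffOn.absolutelyContinuousOnInterval
  have hdecay : ∀ᵐ t, t ∈ Ioo 0 T → deriv (fun t => Real.exp t * g t) t ≤ 0 := by
    filter_upwards [hg.ae_differentiableAt, hd] with t hdiff hdt ht
    have htI : t ∈ uIcc 0 T := by rw [uIcc_of_le hT]; exact Ioo_subset_Icc_self ht
    rw [((Real.hasDerivAt_exp t).fun_mul (hdiff htI).hasDerivAt).deriv]
    nlinarith [Real.exp_pos t, hdt ht]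
  have := (hexp.fun_mul hg).le_of_ae_deriv_nonpos hT hdecay
  rw [Real.exp_zero, one_mul] at this
  rw [Real.exp_neg, le_mul_inv_iff₀ (Real.exp_pos T)]
  linarith

section Trajectory

variable {E : Type*} [NormedAddCommGroup E] [NormedSpace ℝ E] {x f : ℝ → E} {a b : ℝ}

theorem lipschitzOnWith_of_eq_add_integral {C : ℝ≥0}
    (hx : ∀ t ∈ Icc a b, x t = x a + ∫ s in a..t, f s) (hf : IntervalIntegrable f volume a b)
    (hC : ∀ᵐ s, s ∈ Icc a b → ‖f s‖ ≤ C) : LipschitzOnWith C x (Icc a b) := by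
  refine LipschitzOnWith.of_dist_le_mul fun t ht u hu => ?_
  have hint : ∀ v ∈ Icc a b, IntervalIntegrable f volume a v := fun v hv =>
    hf.mono_set (uIcc_subset_uIcc_left (by rwa [uIcc_of_le (ht.1.trans ht.2)]))
  rw [dist_eq_norm, hx t ht, hx u hu, add_sub_add_left_eq_sub,
    intervalIntegral.integral_interval_sub_left (hint t ht) (hint u hu), Real.dist_eq]
  refine intervalIntegral.norm_integral_le_of_norm_le_const_ae ?_
  filter_upwards [hC] with s hs hsI
  exact hs (uIoc_subset_uIcc.trans (uIcc_subset_Icc hu ht) hsI)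

theorem ae_hasDerivAt_of_eq_add_integral [CompleteSpace E]
    (hx : ∀ t ∈ Icc a b, x t = x a + ∫ s in a..t, f s) (hf : IntervalIntegrable f volume a b) :
    ∀ᵐ s, s ∈ Ioo a b → HasDerivAt x (f s) s := by
  filter_upwards [hf.ae_hasDerivAt_integral] with s hs hsI
  have hab : a ≤ b := hsI.1.le.trans hsI.2.le
  rw [uIcc_of_le hab] at hs
  refine ((hs (Ioo_subset_Icc_self hsI) a (left_mem_Icc.2 hab)).const_add (x a))
    |>.congr_of_eventuallyEq ?_
  filter_upwards [Icc_mem_nhds hsI.1 hsI.2] with t ht using hx t ht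

theorem lipschitzOnWith_and_ae_hasDerivAt_of_eq_add_integral_sub [CompleteSpace E] {y : ℝ → E}
    (hx : ∀ t ≥ (0 : ℝ), x t = x 0 + ∫ s in 0..t, (y s - x s)) (hxc : ContinuousOn x (Ici 0))
    (hy : AEStronglyMeasurable y volume) (hxb : ∀ t ≥ (0 : ℝ), ‖x t‖ ≤ 1)
    (hyb : ∀ᵐ s, s ∈ Ici (0 : ℝ) → ‖y s‖ ≤ 1) (T : ℝ) :
    LipschitzOnWith 2 x (Icc 0 T) ∧ ∀ᵐ s, s ∈ Ioo 0 T → HasDerivAt x (y s - x s) s := by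
  have hbound : ∀ᵐ s, s ∈ Icc 0 T → ‖y s - x s‖ ≤ (2 : ℝ≥0) := by
    filter_upwards [hyb] with s hs hsI
    have := norm_sub_le (y s) (x s)
    push_cast
    linarith [hs hsI.1, hxb s hsI.1]
  rcases le_or_gt 0 T with hT | hT
  swap
  · simp [Icc_eq_empty_of_lt hT, Ioo_eq_empty_of_le hT.le]
  have hint : IntervalIntegrable (fun s => y s - x s) volume 0 T := by
    refine (intervalIntegrable_const (c := (2 : ℝ))).mono_fun' ?_ ?_
    · rw [uIoc_of_le hT]
      exact hy.restrict.sub ((hxc.mono fun s hs => hs.1.le).aestronglyMeasurable measurableSet_Ioc)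
    · rw [uIoc_of_le hT, EventuallyLE, ae_restrict_iff' measurableSet_Ioc]
      filter_upwards [hbound] with s hs hsI using hs (Ioc_subset_Icc_self hsI)
  have hx' : ∀ t ∈ Icc 0 T, x t = x 0 + ∫ s in 0..t, (y s - x s) := fun t ht => hx t ht.1
  exact ⟨lipschitzOnWith_of_eq_add_integral hx' hint hbound,
    ae_hasDerivAt_of_eq_add_integral hx' hint⟩

end Trajectory

section FrankWolfe

variable {E₁ E₂ : Type*} [NormedAddCommGroup E₁] [NormedSpace ℝ E₁] [NormedAddCommGroup E₂]
  [NormedSpace ℝ E₂] {Φ : E₁ × E₂ → ℝ} {S₁ : Set E₁} {S₂ : Set E₂}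

noncomputable def gainFst (Φ : E₁ × E₂ → ℝ) (z : E₁ × E₂) (a : E₁) : ℝ :=
  fderiv ℝ Φ z (a - z.1, 0)

noncomputable def gainSnd (Φ : E₁ × E₂ → ℝ) (z : E₁ × E₂) (b : E₂) : ℝ :=
  fderiv ℝ Φ z (0, b - z.2)

noncomputable def frankWolfeGap (Φ : E₁ × E₂ → ℝ) (S₁ : Set E₁) (S₂ : Set E₂) (z : E₁ × E₂) : ℝ :=
  (⨆ a : S₁, gainFst Φ z a) - ⨅ b : S₂, gainSnd Φ z b

theorem bddAbove_range_gainFst (hS₁ : IsCompact S₁) (z : E₁ × E₂) :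
    BddAbove (range fun a : S₁ => gainFst Φ z a) := by
  rw [← image_eq_range (gainFst Φ z)]
  exact hS₁.bddAbove_image (Continuous.continuousOn (by unfold gainFst; fun_prop))

theorem bddBelow_range_gainSnd (hS₂ : IsCompact S₂) (z : E₁ × E₂) :
    BddBelow (range fun b : S₂ => gainSnd Φ z b) := by
  rw [← image_eq_range (gainSnd Φ z)]
  exact hS₂.bddBelow_image (Continuous.continuousOn (by unfold gainSnd; fun_prop))

variable {U : Set (E₁ × E₂)}

theorem contDiffAt_gainFst (hU : IsOpen U) (hΦ : ContDiffOn ℝ 2 Φ U) {z : E₁ × E₂} (hz : z ∈ U)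
    (a : E₁) : ContDiffAt ℝ 1 (fun w : (E₁ × E₂) × E₁ => gainFst Φ w.1 w.2) (z, a) := by
  have hD : ContDiffAt ℝ 1 (fderiv ℝ Φ) z :=
    (hΦ.contDiffAt (hU.mem_nhds hz)).fderiv_right (by norm_num)
  exact (hD.comp (z, a) contDiffAt_fst).clm_apply (by fun_prop)

theorem contDiffAt_gainSnd (hU : IsOpen U) (hΦ : ContDiffOn ℝ 2 Φ U) {z : E₁ × E₂} (hz : z ∈ U)
    (b : E₂) : ContDiffAt ℝ 1 (fun w : (E₁ × E₂) × E₂ => gainSnd Φ w.1 w.2) (z, b) := by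
  have hD : ContDiffAt ℝ 1 (fderiv ℝ Φ) z :=
    (hΦ.contDiffAt (hU.mem_nhds hz)).fderiv_right (by norm_num)
  exact (hD.comp (z, b) contDiffAt_fst).clm_apply (by fun_prop)

theorem exists_lipschitzOnWith_iSup_gainFst (hU : IsOpen U) (hΦ : ContDiffOn ℝ 2 Φ U)
    {k : Set (E₁ × E₂)} (hk : IsCompact k) (hkU : k ⊆ U) (hS₁ : IsCompact S₁) [Nonempty S₁] :
    ∃ K, LipschitzOnWith K (fun z => ⨆ a : S₁, gainFst Φ z a) k := by
  obtain ⟨K, hK⟩ := (hk.prod hS₁).exists_lipschitzOnWith_of_contDiffAt fun w hw =>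
    contDiffAt_gainFst hU hΦ (hkU hw.1) w.2
  exact ⟨K, hK.ciSup_of_isCompact hS₁⟩

theorem hasDerivAt_iSup_gainFst_comp (hS₁ : IsCompact S₁) {z : ℝ → E₁ × E₂} {w : E₁ × E₂}
    {s : ℝ} {a : E₁} {D₂ : E₁ × E₂ →L[ℝ] E₁ × E₂ →L[ℝ] ℝ}
    (hD : HasFDerivAt (fderiv ℝ Φ) D₂ (z s)) (hz : HasDerivAt z w s) (ha : a ∈ S₁)
    (hmax : IsMaxOn (gainFst Φ (z s)) S₁ a)
    (hdiff : DifferentiableAt ℝ (fun t => ⨆ a : S₁, gainFst Φ (z t) a) s) :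
    HasDerivAt (fun t => ⨆ a : S₁, gainFst Φ (z t) a)
      (D₂ w (a - (z s).1, 0) - fderiv ℝ Φ (z s) (w.1, 0)) s := by
  have hgain : HasDerivAt (fun t => gainFst Φ (z t) a)
      (D₂ w (a - (z s).1, 0) - fderiv ℝ Φ (z s) (w.1, 0)) s := by
    have hv : HasDerivAt (fun t => (a - (z t).1, (0 : E₂))) (-w.1, 0) s :=
      (((ContinuousLinearMap.fst ℝ E₁ E₂).hasFDerivAt.comp_hasDerivAt s hz).const_sub a).prodMk
        (hasDerivAt_const s 0)
    refine ((hD.comp_hasDerivAt s hz).clm_apply hv).congr_deriv ?_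
    rw [show ((-w.1, 0) : E₁ × E₂) = -(w.1, 0) by simp, map_neg, sub_eq_add_neg]
    rfl
  have hle : ∀ t, gainFst Φ (z t) a ≤ ⨆ a : S₁, gainFst Φ (z t) a := fun t =>
    le_ciSup (bddAbove_range_gainFst hS₁ (z t)) ⟨a, ha⟩
  have heq := hgain.eq_of_eventuallyLE_of_eq hdiff.hasDerivAt (Eventually.of_forall hle)
    (hmax.iSup_eq ha).symm
  exact heq ▸ hdiff.hasDerivAt

theorem exists_lipschitzOnWith_iInf_gainSnd (hU : IsOpen U) (hΦ : ContDiffOn ℝ 2 Φ U)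
    {k : Set (E₁ × E₂)} (hk : IsCompact k) (hkU : k ⊆ U) (hS₂ : IsCompact S₂) [Nonempty S₂] :
    ∃ K, LipschitzOnWith K (fun z => ⨅ b : S₂, gainSnd Φ z b) k := by
  obtain ⟨K, hK⟩ := (hk.prod hS₂).exists_lipschitzOnWith_of_contDiffAt
    (f := fun w : (E₁ × E₂) × E₂ => gainSnd Φ w.1 w.2) fun w hw =>
    contDiffAt_gainSnd hU hΦ (hkU hw.1) w.2
  exact ⟨K, LipschitzOnWith.ciInf_of_isCompact
    (g := fun w : (E₁ × E₂) × E₂ => gainSnd Φ w.1 w.2) hS₂ hK⟩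

theorem hasDerivAt_iInf_gainSnd_comp (hS₂ : IsCompact S₂) {z : ℝ → E₁ × E₂} {w : E₁ × E₂}
    {s : ℝ} {b : E₂} {D₂ : E₁ × E₂ →L[ℝ] E₁ × E₂ →L[ℝ] ℝ}
    (hD : HasFDerivAt (fderiv ℝ Φ) D₂ (z s)) (hz : HasDerivAt z w s) (hb : b ∈ S₂)
    (hmin : IsMinOn (gainSnd Φ (z s)) S₂ b)
    (hdiff : DifferentiableAt ℝ (fun t => ⨅ b : S₂, gainSnd Φ (z t) b) s) :
    HasDerivAt (fun t => ⨅ b : S₂, gainSnd Φ (z t) b)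
      (D₂ w (0, b - (z s).2) - fderiv ℝ Φ (z s) (0, w.2)) s := by
  have hgain : HasDerivAt (fun t => gainSnd Φ (z t) b)
      (D₂ w (0, b - (z s).2) - fderiv ℝ Φ (z s) (0, w.2)) s := by
    have hv : HasDerivAt (fun t => ((0 : E₁), b - (z t).2)) (0, -w.2) s :=
      (hasDerivAt_const s 0).prodMk
        (((ContinuousLinearMap.snd ℝ E₁ E₂).hasFDerivAt.comp_hasDerivAt s hz).const_sub b)
    refine ((hD.comp_hasDerivAt s hz).clm_apply hv).congr_deriv ?_
    rw [show ((0, -w.2) : E₁ × E₂) = -(0, w.2) by simp, map_neg, sub_eq_add_neg]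
    rfl
  have hle : ∀ t, ⨅ b : S₂, gainSnd Φ (z t) b ≤ gainSnd Φ (z t) b := fun t =>
    ciInf_le (bddBelow_range_gainSnd hS₂ (z t)) ⟨b, hb⟩
  have heq := hdiff.hasDerivAt.eq_of_eventuallyLE_of_eq hgain (Eventually.of_forall hle)
    (hmin.iInf_eq hb)
  exact heq ▸ hdiff.hasDerivAt

theorem second_deriv_fst_nonpos_of_concaveOn (hU : IsOpen U) (hΦ : ContDiffOn ℝ 2 Φ U)
    {x : E₁ × E₂} (hxU : x ∈ U) (hx₁ : x.1 ∈ S₁) (hconc : ConcaveOn ℝ S₁ fun a => Φ (a, x.2))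
    {a : E₁} (ha : a ∈ S₁) : fderiv ℝ (fderiv ℝ Φ) x (a - x.1, 0) (a - x.1, 0) ≤ 0 := by
  have hΦx : ContDiffAt ℝ 2 Φ x := hΦ.contDiffAt (hU.mem_nhds hxU)
  have hline : ConcaveOn ℝ (Icc (0 : ℝ) 1) (Φ ∘ AffineMap.lineMap x (a, x.2)) := by
    convert hconc.comp_lineMap hx₁ ha using 1
    funext t
    simp only [Function.comp_apply, AffineMap.lineMap_apply_module']
    congr 1
    ext <;> simp
  have := hline.second_deriv_lineMap_nonpos
    ((hΦx.eventually (by simp)).mono fun y hy => (hy.differentiableAt (by norm_num)).hasFDerivAt)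
    ((hΦx.fderiv_right (m := 1) (by norm_num)).differentiableAt (by norm_num)).hasFDerivAt
  rwa [show ((a, x.2) : E₁ × E₂) - x = (a - x.1, 0) by ext <;> simp] at this

theorem second_deriv_snd_nonneg_of_convexOn (hU : IsOpen U) (hΦ : ContDiffOn ℝ 2 Φ U)
    {x : E₁ × E₂} (hxU : x ∈ U) (hx₂ : x.2 ∈ S₂) (hconv : ConvexOn ℝ S₂ fun b => Φ (x.1, b))
    {b : E₂} (hb : b ∈ S₂) : 0 ≤ fderiv ℝ (fderiv ℝ Φ) x (0, b - x.2) (0, b - x.2) := by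
  have hΦx : ContDiffAt ℝ 2 Φ x := hΦ.contDiffAt (hU.mem_nhds hxU)
  have hline : ConvexOn ℝ (Icc (0 : ℝ) 1) (Φ ∘ AffineMap.lineMap x (x.1, b)) := by
    convert hconv.comp_lineMap hx₂ hb using 1
    funext t
    simp only [Function.comp_apply, AffineMap.lineMap_apply_module']
    congr 1
    ext <;> simp
  have := hline.second_deriv_lineMap_nonneg
    ((hΦx.eventually (by simp)).mono fun y hy => (hy.differentiableAt (by norm_num)).hasFDerivAt)
    ((hΦx.fderiv_right (m := 1) (by norm_num)).differentiableAt (by norm_num)).hasFDerivAt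
  rwa [show ((x.1, b) : E₁ × E₂) - x = (0, b - x.2) by ext <;> simp] at this

theorem deriv_frankWolfeGap_comp_le (hU : IsOpen U) (hΦ : ContDiffOn ℝ 2 Φ U)
    (hS₁ : IsCompact S₁) (hS₂ : IsCompact S₂) {z : ℝ → E₁ × E₂} {s : ℝ} {a : E₁} {b : E₂}
    (hzU : z s ∈ U) (hz₁ : (z s).1 ∈ S₁) (hz₂ : (z s).2 ∈ S₂)
    (hconc : ConcaveOn ℝ S₁ fun x => Φ (x, (z s).2))
    (hconv : ConvexOn ℝ S₂ fun y => Φ ((z s).1, y))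
    (ha : a ∈ S₁) (hmax : IsMaxOn (gainFst Φ (z s)) S₁ a)
    (hb : b ∈ S₂) (hmin : IsMinOn (gainSnd Φ (z s)) S₂ b)
    (hz : HasDerivAt z (a - (z s).1, b - (z s).2) s)
    (hA : DifferentiableAt ℝ (fun t => ⨆ a : S₁, gainFst Φ (z t) a) s)
    (hB : DifferentiableAt ℝ (fun t => ⨅ b : S₂, gainSnd Φ (z t) b) s) :
    deriv (fun t => frankWolfeGap Φ S₁ S₂ (z t)) s ≤ -frankWolfeGap Φ S₁ S₂ (z s) := by
  set x := z s
  set D₂ := fderiv ℝ (fderiv ℝ Φ) x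
  set va : E₁ × E₂ := (a - x.1, 0)
  set vb : E₁ × E₂ := (0, b - x.2)
  have hΦx : ContDiffAt ℝ 2 Φ x := hΦ.contDiffAt (hU.mem_nhds hzU)
  have hD : HasFDerivAt (fderiv ℝ Φ) D₂ x :=
    ((hΦx.fderiv_right (m := 1) (by norm_num)).differentiableAt (by norm_num)).hasFDerivAt
  have hsym : D₂ vb va = D₂ va vb :=
    hΦx.isSymmSndFDerivAt (by simp [minSmoothness_of_isRCLikeNormedField]) vb va
  have hva : D₂ va va ≤ 0 := second_deriv_fst_nonpos_of_concaveOn hU hΦ hzU hz₁ hconc ha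
  have hvb : 0 ≤ D₂ vb vb := second_deriv_snd_nonneg_of_convexOn hU hΦ hzU hz₂ hconv hb
  have hgap := (hasDerivAt_iSup_gainFst_comp hS₁ hD hz ha hmax hA).sub
    (hasDerivAt_iInf_gainSnd_comp hS₂ hD hz hb hmin hB)
  rw [show (fun t => frankWolfeGap Φ S₁ S₂ (z t)) = (fun t => ⨆ a : S₁, gainFst Φ (z t) a) -
      fun t => ⨅ b : S₂, gainSnd Φ (z t) b from rfl, hgap.deriv,
    frankWolfeGap, hmax.iSup_eq ha, hmin.iInf_eq hb]
  show D₂ (a - x.1, b - x.2) va - fderiv ℝ Φ x va - (D₂ (a - x.1, b - x.2) vb - fderiv ℝ Φ x vb)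
    ≤ -(fderiv ℝ Φ x va - fderiv ℝ Φ x vb)
  rw [show ((a - x.1, b - x.2) : E₁ × E₂) = va + vb by simp [va, vb], map_add, add_apply,
    add_apply]
  linarith

theorem frankWolfeGap_le_mul_exp_neg (hU : IsOpen U) (hΦ : ContDiffOn ℝ 2 Φ U)
    (hS₁ : IsCompact S₁) (hS₂ : IsCompact S₂)
    (hconc : ∀ y ∈ S₂, ConcaveOn ℝ S₁ fun x => Φ (x, y))
    (hconv : ∀ x ∈ S₁, ConvexOn ℝ S₂ fun y => Φ (x, y))
    {z : ℝ → E₁ × E₂} {a : ℝ → E₁} {b : ℝ → E₂} {T : ℝ} {K : ℝ≥0} (hT : 0 ≤ T)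
    (hzS : ∀ t ∈ Icc 0 T, z t ∈ U ∩ S₁ ×ˢ S₂) (hzL : LipschitzOnWith K z (Icc 0 T))
    (hflow : ∀ᵐ s, s ∈ Ioo 0 T → HasDerivAt z (a s - (z s).1, b s - (z s).2) s)
    (hbest : ∀ᵐ s, s ∈ Ioo 0 T → (a s ∈ S₁ ∧ IsMaxOn (gainFst Φ (z s)) S₁ (a s)) ∧
      b s ∈ S₂ ∧ IsMinOn (gainSnd Φ (z s)) S₂ (b s)) :
    frankWolfeGap Φ S₁ S₂ (z T) ≤ frankWolfeGap Φ S₁ S₂ (z 0) * Real.exp (-T) := by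
  have hz0 := (hzS 0 ⟨le_rfl, hT⟩).2
  have : Nonempty S₁ := ⟨⟨_, hz0.1⟩⟩
  have : Nonempty S₂ := ⟨⟨_, hz0.2⟩⟩
  have hk : IsCompact (z '' Icc 0 T) := isCompact_Icc.image_of_continuousOn hzL.continuousOn
  have hkU : z '' Icc 0 T ⊆ U := image_subset_iff.2 fun t ht => (hzS t ht).1
  have hAC : ∀ {L : ℝ≥0} {f : E₁ × E₂ → ℝ}, LipschitzOnWith L f (z '' Icc 0 T) →
      AbsolutelyContinuousOnInterval (f ∘ z) 0 T := fun hf =>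
    (hf.comp (uIcc_of_le hT ▸ hzL) (uIcc_of_le hT ▸ mapsTo_image z _))
      |>.absolutelyContinuousOnInterval
  obtain ⟨KA, hKA⟩ := exists_lipschitzOnWith_iSup_gainFst hU hΦ hk hkU hS₁
  obtain ⟨KB, hKB⟩ := exists_lipschitzOnWith_iInf_gainSnd hU hΦ hk hkU hS₂
  have hA := hAC hKA
  have hB := hAC hKB
  refine (hA.sub hB).le_mul_exp_neg hT ?_
  filter_upwards [hA.ae_differentiableAt, hB.ae_differentiableAt, hflow, hbest]
    with s hAs hBs hzs hbest hs
  have hsI : s ∈ uIcc 0 T := by rw [uIcc_of_le hT]; exact Ioo_subset_Icc_self hs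
  obtain ⟨⟨ha, hmax⟩, hb, hmin⟩ := hbest hs
  obtain ⟨hzU, hz₁, hz₂⟩ := hzS s (Ioo_subset_Icc_self hs)
  exact deriv_frankWolfeGap_comp_le hU hΦ hS₁ hS₂ hzU hz₁ hz₂ (hconc _ hz₂) (hconv _ hz₁)
    ha hmax hb hmin (hzs hs) (hAs hsI) (hBs hsI)

end FrankWolfe

section Simplex

variable {ι κ : Type*} [Fintype ι] [Fintype κ]

theorem norm_le_one_of_mem_stdSimplex {x : ι → ℝ} (hx : x ∈ stdSimplex ℝ ι) : ‖x‖ ≤ 1 :=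
  mem_closedBall_zero_iff.1 (stdSimplex_subset_closedBall hx)

variable {Φ : (ι → ℝ) × (κ → ℝ) → ℝ} {z : (ι → ℝ) × (κ → ℝ)}

theorem sum_sub_mul_eq_gainFst {g : ι → ℝ} (hΦ : DifferentiableAt ℝ Φ z)
    (hg : ∃ L : (ι → ℝ) →L[ℝ] ℝ, HasFDerivAt (fun x => Φ (x, z.2)) L z.1 ∧
      ∀ w, L w = ∑ i, g i * w i) (a : ι → ℝ) :
    ∑ i, (a i - z.1 i) * g i = gainFst Φ z a := by
  obtain ⟨L, hL, hLw⟩ := hg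
  have hcomp := hΦ.hasFDerivAt.comp z.1 (hasFDerivAt_prodMk_left (𝕜 := ℝ) z.1 z.2)
  rw [hL.unique hcomp] at hLw
  rw [gainFst, ← ContinuousLinearMap.inl_apply (R := ℝ), ← ContinuousLinearMap.comp_apply, hLw]
  exact Finset.sum_congr rfl fun i _ => by simp [mul_comm]

theorem sum_sub_mul_eq_gainSnd {g : κ → ℝ} (hΦ : DifferentiableAt ℝ Φ z)
    (hg : ∃ L : (κ → ℝ) →L[ℝ] ℝ, HasFDerivAt (fun y => Φ (z.1, y)) L z.2 ∧
      ∀ w, L w = ∑ x, g x * w x) (b : κ → ℝ) :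
    ∑ x, (b x - z.2 x) * g x = gainSnd Φ z b := by
  obtain ⟨L, hL, hLw⟩ := hg
  have hcomp := hΦ.hasFDerivAt.comp z.2 (hasFDerivAt_prodMk_right (𝕜 := ℝ) z.1 z.2)
  rw [hL.unique hcomp] at hLw
  rw [gainSnd, ← ContinuousLinearMap.inr_apply (R := ℝ), ← ContinuousLinearMap.comp_apply, hLw]
  exact Finset.sum_congr rfl fun x _ => by simp [mul_comm]

theorem isMaxOn_gainFst_of_forall_sum_mul_le {g : ι → ℝ} (hΦ : DifferentiableAt ℝ Φ z)
    (hg : ∃ L : (ι → ℝ) →L[ℝ] ℝ, HasFDerivAt (fun x => Φ (x, z.2)) L z.1 ∧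
      ∀ w, L w = ∑ i, g i * w i) {a₀ : ι → ℝ}
    (hmax : ∀ a ∈ stdSimplex ℝ ι, ∑ i, a i * g i ≤ ∑ i, a₀ i * g i) :
    IsMaxOn (gainFst Φ z) (stdSimplex ℝ ι) a₀ := fun a ha => by
  show gainFst Φ z a ≤ gainFst Φ z a₀
  simp only [← sum_sub_mul_eq_gainFst hΦ hg, sub_mul, Finset.sum_sub_distrib]
  linarith [hmax a ha]

theorem isMinOn_gainSnd_of_forall_sum_mul_le {g : κ → ℝ} (hΦ : DifferentiableAt ℝ Φ z)
    (hg : ∃ L : (κ → ℝ) →L[ℝ] ℝ, HasFDerivAt (fun y => Φ (z.1, y)) L z.2 ∧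
      ∀ w, L w = ∑ x, g x * w x) {b₀ : κ → ℝ}
    (hmin : ∀ b ∈ stdSimplex ℝ κ, ∑ x, b₀ x * g x ≤ ∑ x, b x * g x) :
    IsMinOn (gainSnd Φ z) (stdSimplex ℝ κ) b₀ := fun b hb => by
  show gainSnd Φ z b₀ ≤ gainSnd Φ z b
  simp only [← sum_sub_mul_eq_gainSnd hΦ hg, sub_mul, Finset.sum_sub_distrib]
  linarith [hmin b hb]

theorem iSup_sub_iInf_eq_frankWolfeGap {gp : ι → ℝ} {gm : κ → ℝ} (hΦ : DifferentiableAt ℝ Φ z)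
    (hgp : ∃ L : (ι → ℝ) →L[ℝ] ℝ, HasFDerivAt (fun x => Φ (x, z.2)) L z.1 ∧
      ∀ w, L w = ∑ i, gp i * w i)
    (hgm : ∃ L : (κ → ℝ) →L[ℝ] ℝ, HasFDerivAt (fun y => Φ (z.1, y)) L z.2 ∧
      ∀ w, L w = ∑ x, gm x * w x) :
    (⨆ a : stdSimplex ℝ ι, ∑ i, (a.1 i - z.1 i) * gp i) -
      (⨅ b : stdSimplex ℝ κ, ∑ x, (b.1 x - z.2 x) * gm x) =
      frankWolfeGap Φ (stdSimplex ℝ ι) (stdSimplex ℝ κ) z := by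
  simp only [frankWolfeGap, sum_sub_mul_eq_gainFst hΦ hgp, sum_sub_mul_eq_gainSnd hΦ hgm]

end Simplex

theorem stmt_6_general {K : ℕ} {X : Type*} [Fintype X]
    (F : (Fin K → ℝ) → (X → ℝ) → ℝ)
    (U : Set ((Fin K → ℝ) × (X → ℝ))) (hU : IsOpen U)
    (hF : ContDiffOn ℝ 2 (fun z : (Fin K → ℝ) × (X → ℝ) => F z.1 z.2) U)
    (hconc : ∀ μ ∈ stdSimplex ℝ X, ConcaveOn ℝ (stdSimplex ℝ (Fin K)) (fun p' => F p' μ))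
    (hconv : ∀ p ∈ stdSimplex ℝ (Fin K), ConvexOn ℝ (stdSimplex ℝ X) (fun μ' => F p μ'))
    (gradp : (Fin K → ℝ) → (X → ℝ) → (Fin K → ℝ))
    (gradm : (Fin K → ℝ) → (X → ℝ) → (X → ℝ))
    (hgradp : ∀ z ∈ U, ∃ L : (Fin K → ℝ) →L[ℝ] ℝ,
      HasFDerivAt (fun p' => F p' z.2) L z.1 ∧ ∀ w, L w = ∑ i, gradp z.1 z.2 i * w i)
    (hgradm : ∀ z ∈ U, ∃ L : (X → ℝ) →L[ℝ] ℝ,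
      HasFDerivAt (fun μ' => F z.1 μ') L z.2 ∧ ∀ w, L w = ∑ x, gradm z.1 z.2 x * w x)
    (p : ℝ → (Fin K → ℝ)) (μ : ℝ → (X → ℝ))
    (q : ℝ → (Fin K → ℝ)) (ν : ℝ → (X → ℝ))
    (hmem : ∀ t ≥ (0 : ℝ), p t ∈ stdSimplex ℝ (Fin K) ∧ μ t ∈ stdSimplex ℝ X ∧
      (p t, μ t) ∈ U)
    (hqmeas : Measurable q) (hνmeas : Measurable ν)
    (hpc : ContinuousOn p (Set.Ici (0 : ℝ))) (hμc : ContinuousOn μ (Set.Ici (0 : ℝ)))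
    (hsel : ∀ᵐ t ∂(volume.restrict (Set.Ici (0 : ℝ))),
      (q t ∈ stdSimplex ℝ (Fin K) ∧ ∀ q' ∈ stdSimplex ℝ (Fin K),
        ∑ i, q' i * gradp (p t) (μ t) i ≤ ∑ i, q t i * gradp (p t) (μ t) i) ∧
      (ν t ∈ stdSimplex ℝ X ∧ ∀ ν' ∈ stdSimplex ℝ X,
        ∑ x, ν t x * gradm (p t) (μ t) x ≤ ∑ x, ν' x * gradm (p t) (μ t) x))
    (hodep : ∀ t ≥ (0 : ℝ), p t = p 0 + ∫ s in (0 : ℝ)..t, (q s - p s))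
    (hodeμ : ∀ t ≥ (0 : ℝ), μ t = μ 0 + ∫ s in (0 : ℝ)..t, (ν s - μ s))
    (V : (Fin K → ℝ) → (X → ℝ) → ℝ)
    (hV : ∀ p' μ', V p' μ' =
      (⨆ q' : stdSimplex ℝ (Fin K), ∑ i, (q'.1 i - p' i) * gradp p' μ' i) -
      (⨅ ν' : stdSimplex ℝ X, ∑ x, (ν'.1 x - μ' x) * gradm p' μ' x)) :
    ∀ t ≥ (0 : ℝ), V (p t) (μ t) ≤ V (p 0) (μ 0) * Real.exp (-t) := by
  intro T hT
  set Φ : (Fin K → ℝ) × (X → ℝ) → ℝ := fun z => F z.1 z.2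
  have hΦ : ∀ z ∈ U, DifferentiableAt ℝ Φ z := fun z hz =>
    (hF.contDiffAt (hU.mem_nhds hz)).differentiableAt (by norm_num)
  have hV' : ∀ t ≥ (0 : ℝ), V (p t) (μ t) =
      frankWolfeGap Φ (stdSimplex ℝ (Fin K)) (stdSimplex ℝ X) (p t, μ t) := fun t ht =>
    (hV _ _).trans <| iSup_sub_iInf_eq_frankWolfeGap (hΦ _ (hmem t ht).2.2)
      (hgradp _ (hmem t ht).2.2) (hgradm _ (hmem t ht).2.2)
  have hsel' := (ae_restrict_iff' measurableSet_Ici).1 hsel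
  obtain ⟨hpL, hpd⟩ := lipschitzOnWith_and_ae_hasDerivAt_of_eq_add_integral_sub hodep hpc
    hqmeas.aestronglyMeasurable (fun t ht => norm_le_one_of_mem_stdSimplex (hmem t ht).1)
    (by filter_upwards [hsel'] with s hs hsI using norm_le_one_of_mem_stdSimplex (hs hsI).1.1) T
  obtain ⟨hμL, hμd⟩ := lipschitzOnWith_and_ae_hasDerivAt_of_eq_add_integral_sub hodeμ hμc
    hνmeas.aestronglyMeasurable (fun t ht => norm_le_one_of_mem_stdSimplex (hmem t ht).2.1)
    (by filter_upwards [hsel'] with s hs hsI using norm_le_one_of_mem_stdSimplex (hs hsI).2.1) T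
  rw [hV' T hT, hV' 0 le_rfl]
  refine frankWolfeGap_le_mul_exp_neg hU hF (isCompact_stdSimplex ℝ _) (isCompact_stdSimplex ℝ _)
    hconc hconv (a := q) (b := ν) hT
    (fun t ht => ⟨(hmem t ht.1).2.2, (hmem t ht.1).1, (hmem t ht.1).2.1⟩) (hpL.prodMk hμL) ?_ ?_
  · filter_upwards [hpd, hμd] with s hps hμs hs using (hps hs).prodMk (hμs hs)
  · filter_upwards [hsel'] with s hs hsI
    obtain ⟨⟨hq, hqmax⟩, hν, hνmin⟩ := hs hsI.1.le
    have hzU := (hmem s hsI.1.le).2.2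
    exact ⟨⟨hq, isMaxOn_gainFst_of_forall_sum_mul_le (hΦ _ hzU) (hgradp _ hzU) hqmax⟩,
      hν, isMinOn_gainSnd_of_forall_sum_mul_le (hΦ _ hzU) (hgradm _ hzU) hνmin⟩

/-- Lyapunov decay for the Frank–Wolfe self-play flow. If `F` is twice
continuously differentiable on an open set `U` containing the trajectory, concave in `p`
on `Δ_K` and convex in `μ` on `Δ_X`, and `(p(·), μ(·))` is an absolutely continuous
trajectory (encoded in integral form) whose a.e. derivatives are `q(t) − p(t)` and
`ν(t) − μ(t)` for Frank–Wolfe best responses `q(t)`, `ν(t)` to the linearized payoff, then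
the Lyapunov function
`V(p,μ) = max_{q'∈Δ_K}(q'−p)ᵀ∇_p F(p,μ) − min_{ν'∈Δ_X}(ν'−μ)ᵀ∇_μ F(p,μ)`
satisfies `V(p(t),μ(t)) ≤ V(p(0),μ(0)) e^{−t}` for all `t ≥ 0`. -/
theorem stmt_6 {K : ℕ} (hK : 0 < K) {X : Type*} [Fintype X] [Nonempty X]
    (F : (Fin K → ℝ) → (X → ℝ) → ℝ)
    (U : Set ((Fin K → ℝ) × (X → ℝ))) (hU : IsOpen U)
    (hF : ContDiffOn ℝ 2 (fun z : (Fin K → ℝ) × (X → ℝ) => F z.1 z.2) U)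
    (hconc : ∀ μ ∈ stdSimplex ℝ X, ConcaveOn ℝ (stdSimplex ℝ (Fin K)) (fun p' => F p' μ))
    (hconv : ∀ p ∈ stdSimplex ℝ (Fin K), ConvexOn ℝ (stdSimplex ℝ X) (fun μ' => F p μ'))
    (gradp : (Fin K → ℝ) → (X → ℝ) → (Fin K → ℝ))
    (gradm : (Fin K → ℝ) → (X → ℝ) → (X → ℝ))
    (hgradp : ∀ z ∈ U, ∃ L : (Fin K → ℝ) →L[ℝ] ℝ,
      HasFDerivAt (fun p' => F p' z.2) L z.1 ∧ ∀ w, L w = ∑ i, gradp z.1 z.2 i * w i)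
    (hgradm : ∀ z ∈ U, ∃ L : (X → ℝ) →L[ℝ] ℝ,
      HasFDerivAt (fun μ' => F z.1 μ') L z.2 ∧ ∀ w, L w = ∑ x, gradm z.1 z.2 x * w x)
    (p : ℝ → (Fin K → ℝ)) (μ : ℝ → (X → ℝ))
    (q : ℝ → (Fin K → ℝ)) (ν : ℝ → (X → ℝ))
    (hmem : ∀ t ≥ (0 : ℝ), p t ∈ stdSimplex ℝ (Fin K) ∧ μ t ∈ stdSimplex ℝ X ∧
      (p t, μ t) ∈ U)
    (hqmeas : Measurable q) (hνmeas : Measurable ν)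
    (hpc : ContinuousOn p (Set.Ici (0 : ℝ))) (hμc : ContinuousOn μ (Set.Ici (0 : ℝ)))
    (hsel : ∀ᵐ t ∂(volume.restrict (Set.Ici (0 : ℝ))),
      (q t ∈ stdSimplex ℝ (Fin K) ∧ ∀ q' ∈ stdSimplex ℝ (Fin K),
        ∑ i, q' i * gradp (p t) (μ t) i ≤ ∑ i, q t i * gradp (p t) (μ t) i) ∧
      (ν t ∈ stdSimplex ℝ X ∧ ∀ ν' ∈ stdSimplex ℝ X,
        ∑ x, ν t x * gradm (p t) (μ t) x ≤ ∑ x, ν' x * gradm (p t) (μ t) x))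
    (hodep : ∀ t ≥ (0 : ℝ), p t = p 0 + ∫ s in (0 : ℝ)..t, (q s - p s))
    (hodeμ : ∀ t ≥ (0 : ℝ), μ t = μ 0 + ∫ s in (0 : ℝ)..t, (ν s - μ s))
    (V : (Fin K → ℝ) → (X → ℝ) → ℝ)
    (hV : ∀ p' μ', V p' μ' =
      (⨆ q' : stdSimplex ℝ (Fin K), ∑ i, (q'.1 i - p' i) * gradp p' μ' i) -
      (⨅ ν' : stdSimplex ℝ X, ∑ x, (ν'.1 x - μ' x) * gradm p' μ' x)) :
    ∀ t ≥ (0 : ℝ), V (p t) (μ t) ≤ V (p 0) (μ 0) * Real.exp (-t) :=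
  stmt_6_general F U hU hF hconc hconv gradp gradm hgradp hgradm p μ q ν hmem hqmeas hνmeas hpc hμc
    hsel hodep hodeμ V hV
end

section
/- In Gaussian BAI, for each x ∈ X the function D(·,x) is differentiable on int Δ_K, and for every p ∈ Δ_K every element g of the limiting-gradient hull ∂°D(·,x)(p) satisfies: g_k = 0 for all k ∉ {I*, x}; 0 ≤ g_{I*} ≤ c_x and 0 ≤ g_x ≤ c_x where c_x = (θ_{I*} − θ_x)²/(2σ²); and max{g_{I*}, g_x} ≥ c_x/4. -/
/-!
Near a point with `p I* + p x > 0`, `D(·,x)` is `c_x · p_{I*} p_x / (p_{I*} + p_x)`, so its gradient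
is `c_x · (p_x², p_{I*}²) / (p_{I*} + p_x)²` in the coordinates `(I*, x)` and vanishes elsewhere.
Both entries lie in `[0, c_x]`, and since `(a + b)² ≤ 2 (a² + b²)` their sum is at least `c_x / 2`.
Unlike `max ≥ c_x / 4`, these constraints cut out a closed convex set, which therefore also contains
the limits of interior gradients and their convex hull.
-/

open Filter

/-- The relative interior of the standard simplex. -/
def simplexInterior (K : ℕ) : Set (Fin K → ℝ) :=
  {p | p ∈ stdSimplex ℝ (Fin K) ∧ ∀ i, 0 < p i}

/-- Gaussian best-arm-identification payoff:
`D(p,x) = ((θ_{I*} − θ_x)²/(2σ²)) · p_{I*} p_x / (p_{I*} + p_x)` when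
`p_{I*} + p_x > 0`, and `0` otherwise. -/
noncomputable def Dg {K : ℕ} (θ : Fin K → ℝ) (σ : ℝ) (Istar : Fin K)
    (p : Fin K → ℝ) (x : Fin K) : ℝ :=
  if 0 < p Istar + p x then
    ((θ Istar - θ x) ^ 2 / (2 * σ ^ 2)) * (p Istar * p x / (p Istar + p x))
  else 0

/-- The gradient vector of `D(·,x)` obtained from the Fréchet derivative. -/
noncomputable def gradDg {K : ℕ} (θ : Fin K → ℝ) (σ : ℝ) (Istar : Fin K)
    (x : Fin K) (p : Fin K → ℝ) : Fin K → ℝ :=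
  fun i => fderiv ℝ (fun p' => Dg θ σ Istar p' x) p (Pi.single i 1)

/-- The limiting-gradient hull (Clarke generalized gradient) of `D(·,x)` at `p`. -/
noncomputable def clarkeDg {K : ℕ} (θ : Fin K → ℝ) (σ : ℝ) (Istar : Fin K)
    (x : Fin K) (p : Fin K → ℝ) : Set (Fin K → ℝ) :=
  convexHull ℝ {g : Fin K → ℝ | ∃ pn : ℕ → (Fin K → ℝ),
    (∀ n, pn n ∈ simplexInterior K) ∧
    Tendsto pn atTop (nhds p) ∧
    Tendsto (fun n => gradDg θ σ Istar x (pn n)) atTop (nhds g)}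

open Topology

theorem hasDerivAt_mul_div_add_along_line (u v a b : ℝ) (h : u + v ≠ 0) :
    HasDerivAt (fun t : ℝ => (u + t * a) * (v + t * b) / ((u + t * a) + (v + t * b)))
      ((a * v ^ 2 + b * u ^ 2) / (u + v) ^ 2) 0 := by
  have hu : HasDerivAt (fun t : ℝ => u + t * a) a 0 := by
    simpa using ((hasDerivAt_id (0 : ℝ)).mul_const a).const_add u
  have hv : HasDerivAt (fun t : ℝ => v + t * b) b 0 := by
    simpa using ((hasDerivAt_id (0 : ℝ)).mul_const b).const_add v
  refine ((hu.fun_mul hv).fun_div (hu.fun_add hv) (by simpa using h)).congr_deriv ?_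
  simp only [zero_mul, add_zero]
  field_simp
  ring

theorem sq_div_add_sq_le_one {u v : ℝ} (hu : 0 ≤ u) (hv : 0 ≤ v) : v ^ 2 / (u + v) ^ 2 ≤ 1 :=
  div_le_one_of_le₀ (pow_le_pow_left₀ hv (le_add_of_nonneg_left hu) 2) (sq_nonneg _)

theorem one_half_le_sq_add_sq_div_add_sq {u v : ℝ} (h : u + v ≠ 0) :
    1 / 2 ≤ (u ^ 2 + v ^ 2) / (u + v) ^ 2 := by
  rw [div_le_div_iff₀ two_pos (by positivity)]
  linarith [add_sq_le (a := u) (b := v)]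

section GradientBox

variable {ι : Type*} (i j : ι) (c : ℝ)

def gradientBox : Set (ι → ℝ) :=
  {g | (∀ k, k ≠ i → k ≠ j → g k = 0) ∧ (0 ≤ g i ∧ g i ≤ c) ∧ (0 ≤ g j ∧ g j ≤ c) ∧
    c / 2 ≤ g i + g j}

theorem isClosed_gradientBox : IsClosed (gradientBox i j c) := by
  simp only [gradientBox, Set.ofPred_and, Set.ofPred_forall]
  refine .inter (isClosed_iInter fun k => isClosed_iInter fun _ => isClosed_iInter fun _ =>
    isClosed_eq (continuous_apply k) continuous_const) (.inter ?_ (.inter ?_ ?_))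
  · exact .inter (isClosed_le continuous_const (continuous_apply i))
      (isClosed_le (continuous_apply i) continuous_const)
  · exact .inter (isClosed_le continuous_const (continuous_apply j))
      (isClosed_le (continuous_apply j) continuous_const)
  · exact isClosed_le continuous_const ((continuous_apply i).add (continuous_apply j))

theorem convex_gradientBox : Convex ℝ (gradientBox i j c) := by
  rintro g ⟨hg0, ⟨hgi, hgi'⟩, ⟨hgj, hgj'⟩, hgs⟩ h ⟨hh0, ⟨hhi, hhi'⟩, ⟨hhj, hhj'⟩, hhs⟩
    a b ha hb hab
  simp only [gradientBox, Set.mem_ofPred_eq, Pi.add_apply, Pi.smul_apply, smul_eq_mul]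
  refine ⟨fun k hki hkj => by simp [hg0 k hki hkj, hh0 k hki hkj], ⟨?_, ?_⟩, ⟨?_, ?_⟩, ?_⟩ <;>
    nlinarith

end GradientBox

theorem dg_eventuallyEq {K : ℕ} (θ : Fin K → ℝ) (σ : ℝ) (Istar x : Fin K) {p : Fin K → ℝ}
    (hp : 0 < p Istar + p x) :
    (fun q => Dg θ σ Istar q x) =ᶠ[𝓝 p]
      fun q => (θ Istar - θ x) ^ 2 / (2 * σ ^ 2) * (q Istar * q x / (q Istar + q x)) := by
  have hopen : IsOpen {q : Fin K → ℝ | 0 < q Istar + q x} :=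
    isOpen_lt continuous_const (by fun_prop)
  filter_upwards [hopen.mem_nhds hp] with q hq
  exact if_pos hq

theorem differentiableAt_dg {K : ℕ} (θ : Fin K → ℝ) (σ : ℝ) (Istar x : Fin K)
    {p : Fin K → ℝ} (hp : 0 < p Istar + p x) :
    DifferentiableAt ℝ (fun q => Dg θ σ Istar q x) p := by
  rw [(dg_eventuallyEq θ σ Istar x hp).differentiableAt_iff]
  fun_prop (disch := exact hp.ne')

theorem gradDg_apply {K : ℕ} (θ : Fin K → ℝ) (σ : ℝ) (Istar x : Fin K)
    {p : Fin K → ℝ} (hp : 0 < p Istar + p x) (i : Fin K) :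
    gradDg θ σ Istar x p i = (θ Istar - θ x) ^ 2 / (2 * σ ^ 2) *
      (((Pi.single i 1 : Fin K → ℝ) Istar * p x ^ 2 + (Pi.single i 1 : Fin K → ℝ) x * p Istar ^ 2) /
        (p Istar + p x) ^ 2) := by
  have hline : HasLineDerivAt ℝ
      (fun q => (θ Istar - θ x) ^ 2 / (2 * σ ^ 2) * (q Istar * q x / (q Istar + q x)))
      ((θ Istar - θ x) ^ 2 / (2 * σ ^ 2) * (((Pi.single i 1 : Fin K → ℝ) Istar * p x ^ 2 +
        (Pi.single i 1 : Fin K → ℝ) x * p Istar ^ 2) / (p Istar + p x) ^ 2)) p (Pi.single i 1) :=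
    (hasDerivAt_mul_div_add_along_line (p Istar) (p x) _ _ hp.ne').const_mul _
  exact ((differentiableAt_dg θ σ Istar x hp).hasFDerivAt.hasLineDerivAt _).unique
    (hline.congr_of_eventuallyEq (dg_eventuallyEq θ σ Istar x hp))

theorem gradDg_mem_gradientBox {K : ℕ} (θ : Fin K → ℝ) (σ : ℝ) {Istar x : Fin K}
    (hx : x ≠ Istar) {p : Fin K → ℝ} (hI : 0 ≤ p Istar) (hpx : 0 ≤ p x)
    (hp : 0 < p Istar + p x) :
    gradDg θ σ Istar x p ∈ gradientBox Istar x ((θ Istar - θ x) ^ 2 / (2 * σ ^ 2)) := by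
  set c := (θ Istar - θ x) ^ 2 / (2 * σ ^ 2)
  have hc : 0 ≤ c := by positivity
  have hgI : gradDg θ σ Istar x p Istar = c * (p x ^ 2 / (p Istar + p x) ^ 2) := by
    simp [gradDg_apply θ σ Istar x hp, hx, c]
  have hgx : gradDg θ σ Istar x p x = c * (p Istar ^ 2 / (p Istar + p x) ^ 2) := by
    simp [gradDg_apply θ σ Istar x hp, hx.symm, c]
  refine ⟨fun k hkI hkx => by simp [gradDg_apply θ σ Istar x hp, hkI, hkx], ?_, ?_, ?_⟩
  · rw [hgI]
    exact ⟨by positivity, mul_le_of_le_one_right hc (sq_div_add_sq_le_one hI hpx)⟩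
  · rw [hgx, add_comm (p Istar)]
    exact ⟨by positivity, mul_le_of_le_one_right hc (sq_div_add_sq_le_one hpx hI)⟩
  · rw [hgI, hgx, ← mul_add, ← add_div, add_comm (p x ^ 2)]
    have := mul_le_mul_of_nonneg_left (one_half_le_sq_add_sq_div_add_sq hp.ne') hc
    linarith

theorem clarkeDg_subset_gradientBox {K : ℕ} (θ : Fin K → ℝ) (σ : ℝ) {Istar x : Fin K}
    (hx : x ≠ Istar) (p : Fin K → ℝ) :
    clarkeDg θ σ Istar x p ⊆ gradientBox Istar x ((θ Istar - θ x) ^ 2 / (2 * σ ^ 2)) := by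
  refine convexHull_min ?_ (convex_gradientBox _ _ _)
  rintro g ⟨pn, hpn, -, hlim⟩
  refine (isClosed_gradientBox _ _ _).mem_of_tendsto hlim (Eventually.of_forall fun n => ?_)
  have hI := (hpn n).2 Istar
  have hpx := (hpn n).2 x
  exact gradDg_mem_gradientBox θ σ hx hI.le hpx.le (add_pos hI hpx)

theorem stmt_9_general {K : ℕ} (θ : Fin K → ℝ) (Istar : Fin K) (σ : ℝ) (x : Fin K) (hx : x ≠ Istar) :
    (∀ p ∈ simplexInterior K, DifferentiableAt ℝ (fun p' => Dg θ σ Istar p' x) p) ∧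
    ∀ p ∈ stdSimplex ℝ (Fin K), ∀ g ∈ clarkeDg θ σ Istar x p,
      (∀ k, k ≠ Istar → k ≠ x → g k = 0) ∧
      (0 ≤ g Istar ∧ g Istar ≤ (θ Istar - θ x) ^ 2 / (2 * σ ^ 2)) ∧
      (0 ≤ g x ∧ g x ≤ (θ Istar - θ x) ^ 2 / (2 * σ ^ 2)) ∧
      ((θ Istar - θ x) ^ 2 / (2 * σ ^ 2)) / 4 ≤ max (g Istar) (g x) := by
  refine ⟨fun p hp => differentiableAt_dg θ σ Istar x (add_pos (hp.2 Istar) (hp.2 x)),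
    fun p _ g hg => ?_⟩
  obtain ⟨hzero, hgI, hgx, hsum⟩ := clarkeDg_subset_gradientBox θ σ hx p hg
  exact ⟨hzero, hgI, hgx, by linarith [le_max_left (g Istar) (g x), le_max_right (g Istar) (g x)]⟩

/-- In Gaussian BAI, `D(·,x)` is differentiable on `int Δ_K`, and for every
`p ∈ Δ_K`, every `g` in the limiting-gradient hull `∂°D(·,x)(p)` satisfies: `g k = 0` for
`k ∉ {I*, x}`, `0 ≤ g_{I*} ≤ c_x`, `0 ≤ g_x ≤ c_x` with `c_x = (θ_{I*}−θ_x)²/(2σ²)`, and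
`max{g_{I*}, g_x} ≥ c_x/4`. -/
theorem stmt_9 {K : ℕ} (θ : Fin K → ℝ) (Istar : Fin K)
    (hmax : ∀ j ≠ Istar, θ j < θ Istar) (σ : ℝ) (hσ : 0 < σ)
    (x : Fin K) (hx : x ≠ Istar) :
    (∀ p ∈ simplexInterior K, DifferentiableAt ℝ (fun p' => Dg θ σ Istar p' x) p) ∧
    ∀ p ∈ stdSimplex ℝ (Fin K), ∀ g ∈ clarkeDg θ σ Istar x p,
      (∀ k, k ≠ Istar → k ≠ x → g k = 0) ∧
      (0 ≤ g Istar ∧ g Istar ≤ (θ Istar - θ x) ^ 2 / (2 * σ ^ 2)) ∧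
      (0 ≤ g x ∧ g x ≤ (θ Istar - θ x) ^ 2 / (2 * σ ^ 2)) ∧
      ((θ Istar - θ x) ^ 2 / (2 * σ ^ 2)) / 4 ≤ max (g Istar) (g x) :=
  stmt_9_general θ Istar σ x hx
end

section
/- In Gaussian BAI, set κ_x = (θ_{I*} − θ_x)²/(8σ²), κ_min = min_{x∈X} κ_x, M = max_{x∈X} (θ_{I*} − θ_x)²/(2σ²), and ε₀ = min{1/2, κ_min/(4KM)}. Let p ∈ Δ_K be such that Z = {x ∈ X : p_{I*} p_x = 0} is nonempty, and let μ ∈ Δ_X satisfy Σ_{x∉Z} μ_x ≤ ε₀. Then every vector of the form f = Σ_{x∈X} μ_x g^{(x)} with g^{(x)} ∈ ∂°D(·,x)(p) for each x satisfies max_{i : p_i = 0} f_i ≥ κ_min/(2K) and max_{i : p_i > 0} f_i ≤ ε₀ M ≤ κ_min/(4K); in particular, every maximizer of i ↦ f_i lies in {i : p_i = 0}. -/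
/-!
On the interior of the simplex, `∇D(·,x)` at `q` is `c_x` times
`((q_x/(q_{I*}+q_x))², (q_{I*}/(q_{I*}+q_x))²)` in the coordinates `I*`, `x` and `0` elsewhere,
where `c_x = (θ_{I*}−θ_x)²/(2σ²) = 4κ_x`. Its entries lie in `[0, c_x]` and sum to at least `c_x/2`,
and when `p_{I*} p_x = 0` its limits at `p` vanish on the support of `p`. These constraints are
closed and convex, so they hold on all of `∂°D(·,x)(p)`. In `f = Σ μ_x g^{(x)}` a coordinate in the
support of `p` therefore only receives mass from scenarios outside `Z`, so `f_i ≤ ε₀ M`, while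
the zero coordinates of `p` carry total mass at least `(1 − ε₀) · 2κ_min ≥ κ_min`; as there are at
most `K` of them, one gets `κ_min/K`. Since `ε₀ M ≤ κ_min/(4K)`, a maximizer must be such a zero.
-/

open Filter

open Finset

section Envelope

variable {n : Type*} [Fintype n]

def gradEnvelope (c : ℝ) (p : n → ℝ) (Istar x : n) : Set (n → ℝ) :=
  {g | (∀ i, g i ∈ Set.Icc 0 c) ∧ c / 2 ≤ ∑ i, g i ∧
    (p Istar * p x = 0 → ∀ i, 0 < p i → g i = 0)}

theorem convex_gradEnvelope (c : ℝ) (p : n → ℝ) (Istar x : n) :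
    Convex ℝ (gradEnvelope c p Istar x) := by
  rintro g ⟨hg_mem, hg_sum, hg_zero⟩ h ⟨hh_mem, hh_sum, hh_zero⟩ a b ha hb hab
  simp only [gradEnvelope, Set.mem_ofPred_eq, Pi.add_apply, Pi.smul_apply, smul_eq_mul,
    sum_add_distrib, ← mul_sum]
  have hc : (a + b) * c = c := by rw [hab, one_mul]
  refine ⟨fun i => ⟨?_, ?_⟩, ?_, fun hZ i hi => ?_⟩
  · nlinarith [(hg_mem i).1, (hh_mem i).1]
  · nlinarith [mul_le_mul_of_nonneg_left (hg_mem i).2 ha,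
      mul_le_mul_of_nonneg_left (hh_mem i).2 hb]
  · nlinarith [mul_le_mul_of_nonneg_left hg_sum ha, mul_le_mul_of_nonneg_left hh_sum hb]
  · rw [hg_zero hZ i hi, hh_zero hZ i hi]
    ring

end Envelope

section Gradient

variable {K : ℕ} (θ : Fin K → ℝ) (σ : ℝ) (Istar x : Fin K)

noncomputable def gradDgExplicit (q : Fin K → ℝ) : Fin K → ℝ :=
  fun i => (θ Istar - θ x) ^ 2 / (2 * σ ^ 2) *
    ((q x / (q Istar + q x)) ^ 2 * (Pi.single i 1 : Fin K → ℝ) Istar +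
      (q Istar / (q Istar + q x)) ^ 2 * (Pi.single i 1 : Fin K → ℝ) x)

theorem gradDg_eq_gradDgExplicit {q : Fin K → ℝ} (hq : 0 < q Istar + q x) :
    gradDg θ σ Istar x q = gradDgExplicit θ σ Istar x q := by
  have hI := hasFDerivAt_apply (𝕜 := ℝ) (F' := fun _ : Fin K => ℝ) Istar q
  have hx := hasFDerivAt_apply (𝕜 := ℝ) (F' := fun _ : Fin K => ℝ) x q
  have hinv := (hasFDerivAt_inv' (𝕜 := ℝ) (R := ℝ) hq.ne').comp q (hI.add hx)
  have hD := ((hI.mul hx).mul hinv).const_mul ((θ Istar - θ x) ^ 2 / (2 * σ ^ 2))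
  have hloc : (fun p => Dg θ σ Istar p x) =ᶠ[nhds q]
      fun p => (θ Istar - θ x) ^ 2 / (2 * σ ^ 2) * (p Istar * p x * (p Istar + p x)⁻¹) := by
    have hopen : IsOpen {p : Fin K → ℝ | 0 < p Istar + p x} :=
      isOpen_lt continuous_const (by fun_prop)
    filter_upwards [hopen.mem_nhds hq] with p hp
    exact (if_pos hp).trans (by ring)
  funext i
  rw [gradDg, (hD.congr_of_eventuallyEq hloc).fderiv, gradDgExplicit]
  simp only [Pi.mul_apply, ContinuousLinearMap.comp_add, ContinuousLinearMap.neg_comp, smul_add,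
    smul_neg, Function.comp_apply, Pi.add_apply, add_apply, neg_apply, smul_apply,
    ContinuousLinearMap.comp_apply, ContinuousLinearMap.proj_apply,
    ContinuousLinearMap.mulLeftRight_apply, smul_eq_mul]
  field_simp
  ring

theorem continuousAt_gradDgExplicit {q : Fin K → ℝ} (hq : q Istar + q x ≠ 0) :
    ContinuousAt (gradDgExplicit θ σ Istar x) q :=
  continuousAt_pi.2 fun _ => by unfold gradDgExplicit; fun_prop (disch := exact hq)

variable {θ σ Istar x}

theorem gradDgExplicit_apply_of_ne {q : Fin K → ℝ} {i : Fin K} (hiI : i ≠ Istar) (hix : i ≠ x) :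
    gradDgExplicit θ σ Istar x q i = 0 := by
  simp [gradDgExplicit, Pi.single_eq_of_ne hiI.symm, Pi.single_eq_of_ne hix.symm]

theorem gradDgExplicit_mem_Icc (hx : x ≠ Istar) {q : Fin K → ℝ} (hqI : 0 ≤ q Istar)
    (hqx : 0 ≤ q x) (i : Fin K) :
    gradDgExplicit θ σ Istar x q i ∈ Set.Icc 0 ((θ Istar - θ x) ^ 2 / (2 * σ ^ 2)) := by
  have hsq_le : ∀ a b : ℝ, 0 ≤ a → 0 ≤ b → (a / (a + b)) ^ 2 ≤ 1 := fun a b ha hb =>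
    pow_le_one₀ (by positivity) (div_le_one_of_le₀ (by linarith) (by positivity))
  have hc : 0 ≤ (θ Istar - θ x) ^ 2 / (2 * σ ^ 2) := by positivity
  unfold gradDgExplicit
  rcases eq_or_ne i Istar with rfl | hiI
  · simp only [Pi.single_eq_same, Pi.single_eq_of_ne hx, mul_one, mul_zero, add_zero]
    refine ⟨by positivity, mul_le_of_le_one_right hc ?_⟩
    simpa only [add_comm] using hsq_le _ _ hqx hqI
  rcases eq_or_ne i x with rfl | hix
  · simp only [Pi.single_eq_same, Pi.single_eq_of_ne hiI.symm, mul_one, mul_zero, zero_add]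
    exact ⟨by positivity, mul_le_of_le_one_right hc (hsq_le _ _ hqI hqx)⟩
  · rw [← gradDgExplicit, gradDgExplicit_apply_of_ne hiI hix]
    exact ⟨le_rfl, hc⟩

theorem half_le_sum_gradDgExplicit {q : Fin K → ℝ} (hq : q Istar + q x ≠ 0) :
    (θ Istar - θ x) ^ 2 / (2 * σ ^ 2) / 2 ≤ ∑ i, gradDgExplicit θ σ Istar x q i := by
  simp only [gradDgExplicit, ← mul_sum, sum_add_distrib, Finset.sum_pi_single,
    mem_univ, if_true]
  have hc : 0 ≤ (θ Istar - θ x) ^ 2 / (2 * σ ^ 2) := by positivity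
  have hhalf : 1 / 2 ≤ (q x / (q Istar + q x)) ^ 2 + (q Istar / (q Istar + q x)) ^ 2 := by
    rw [div_pow, div_pow, ← add_div, le_div_iff₀ (by positivity)]
    nlinarith [sq_nonneg (q Istar - q x)]
  nlinarith

theorem gradDgExplicit_eq_zero (hx : x ≠ Istar) {q : Fin K → ℝ} (hq : q Istar * q x = 0)
    {i : Fin K} (hi : 0 < q i) : gradDgExplicit θ σ Istar x q i = 0 := by
  unfold gradDgExplicit
  rcases eq_or_ne i Istar with rfl | hiI
  · simp [Pi.single_eq_of_ne hx, (mul_eq_zero.1 hq).resolve_left hi.ne']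
  rcases eq_or_ne i x with rfl | hix
  · simp [Pi.single_eq_of_ne hiI.symm, (mul_eq_zero.1 hq).resolve_right hi.ne']
  · rw [← gradDgExplicit, gradDgExplicit_apply_of_ne hiI hix]

theorem limitingGrad_mem_gradEnvelope (hx : x ≠ Istar) {p g : Fin K → ℝ} {pn : ℕ → Fin K → ℝ}
    (hpn : ∀ n, pn n ∈ simplexInterior K) (hlim : Tendsto pn atTop (nhds p))
    (hg : Tendsto (fun n => gradDg θ σ Istar x (pn n)) atTop (nhds g)) :
    g ∈ gradEnvelope ((θ Istar - θ x) ^ 2 / (2 * σ ^ 2)) p Istar x := by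
  have hpos : ∀ n, 0 < pn n Istar + pn n x := fun n => add_pos ((hpn n).2 _) ((hpn n).2 _)
  have hG : Tendsto (fun n => gradDgExplicit θ σ Istar x (pn n)) atTop (nhds g) :=
    hg.congr fun n => gradDg_eq_gradDgExplicit θ σ Istar x (hpos n)
  have hGi := tendsto_pi_nhds.1 hG
  refine ⟨fun i => isClosed_Icc.mem_of_tendsto (hGi i) (Eventually.of_forall fun n =>
      gradDgExplicit_mem_Icc hx ((hpn n).2 _).le ((hpn n).2 _).le i),
    ge_of_tendsto (tendsto_finsetSum _ fun i _ => hGi i) (Eventually.of_forall fun n =>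
      half_le_sum_gradDgExplicit (hpos n).ne'),
    fun hZ i hi => ?_⟩
  by_cases hs : p Istar + p x = 0
  · -- a limiting gradient is still supported on `{Istar, x}`, and here `p` vanishes there
    have hI : p Istar = 0 := by rcases mul_eq_zero.1 hZ with h | h <;> linarith
    have hiI : i ≠ Istar := by rintro rfl; exact hi.ne' hI
    have hix : i ≠ x := by rintro rfl; exact hi.ne' (by linarith)
    refine tendsto_nhds_unique (hGi i) ?_
    simp only [gradDgExplicit_apply_of_ne hiI hix, tendsto_const_nhds]
  · rw [tendsto_nhds_unique hG ((continuousAt_gradDgExplicit θ σ Istar x hs).tendsto.comp hlim)]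
    exact gradDgExplicit_eq_zero hx hZ hi

theorem clarkeDg_subset_gradEnvelope (hx : x ≠ Istar) (p : Fin K → ℝ) :
    clarkeDg θ σ Istar x p ⊆ gradEnvelope ((θ Istar - θ x) ^ 2 / (2 * σ ^ 2)) p Istar x :=
  convexHull_min (fun _ ⟨_, hpn, hlim, hg⟩ => limitingGrad_mem_gradEnvelope hx hpn hlim hg)
    (convex_gradEnvelope _ _ _ _)

end Gradient

section Mixture

variable {ι n : Type*} [Fintype ι] {μ : ι → ℝ} {g : ι → n → ℝ} {p : n → ℝ}
  {Z : ι → Prop} [DecidablePred Z] {ε M : ℝ}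

theorem sum_mul_apply_le_of_pos (hμ : ∀ x, 0 ≤ μ x)
    (hmass : ∑ x, (if Z x then 0 else μ x) ≤ ε) (hM : 0 ≤ M) (hg : ∀ x i, g x i ≤ M)
    (hgZ : ∀ x, Z x → ∀ i, 0 < p i → g x i = 0) {i : n} (hi : 0 < p i) :
    ∑ x, μ x * g x i ≤ ε * M :=
  calc ∑ x, μ x * g x i ≤ ∑ x, (if Z x then 0 else μ x) * M := sum_le_sum fun x _ => by
        split_ifs with hx
        · rw [hgZ x hx i hi, mul_zero, zero_mul]
        · exact mul_le_mul_of_nonneg_left (hg x i) (hμ x)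
    _ = (∑ x, if Z x then 0 else μ x) * M := (sum_mul _ _ _).symm
    _ ≤ ε * M := mul_le_mul_of_nonneg_right hmass hM

theorem le_sum_filter_sum_mul_apply [Fintype n] {κ : ℝ} (hμ : μ ∈ stdSimplex ℝ ι)
    (hmass : ∑ x, (if Z x then 0 else μ x) ≤ ε) (hε : ε ≤ 1 / 2) (hκ : 0 ≤ κ)
    (hp : ∀ i, 0 ≤ p i) (hg : ∀ x i, 0 ≤ g x i) (hgZ : ∀ x, Z x → ∀ i, 0 < p i → g x i = 0)
    (hgsum : ∀ x, Z x → 2 * κ ≤ ∑ i, g x i) :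
    κ ≤ ∑ i with p i = 0, ∑ x, μ x * g x i := by
  have hZmass : ∑ x, (if Z x then μ x else 0) = 1 - ∑ x, (if Z x then 0 else μ x) := by
    rw [eq_sub_iff_add_eq, ← sum_add_distrib, ← hμ.2]
    exact sum_congr rfl fun x _ => by split_ifs <;> simp
  have hterm : ∀ x, (if Z x then μ x else 0) * (2 * κ) ≤ μ x * ∑ i with p i = 0, g x i := by
    intro x
    split_ifs with hx
    · have hsupp : ∀ i, g x i ≠ 0 → p i = 0 := fun i hgi =>
        by_contra fun hpi => hgi (hgZ x hx i ((hp i).lt_of_ne' hpi))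
      rw [sum_filter_of_ne fun i _ => hsupp i]
      exact mul_le_mul_of_nonneg_left (hgsum x hx) (hμ.1 x)
    · rw [zero_mul]
      exact mul_nonneg (hμ.1 x) (sum_nonneg fun i _ => hg x i)
  calc κ ≤ (1 - ε) * (2 * κ) := by nlinarith
    _ ≤ (∑ x, if Z x then μ x else 0) * (2 * κ) := by
        rw [hZmass]
        exact mul_le_mul_of_nonneg_right (by linarith) (by linarith)
    _ ≤ ∑ x, μ x * ∑ i with p i = 0, g x i := by
        rw [sum_mul]
        exact sum_le_sum fun x _ => hterm x
    _ = ∑ i with p i = 0, ∑ x, μ x * g x i := by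
        simp only [mul_sum]
        exact sum_comm

end Mixture

theorem Finset.exists_div_card_le_of_le_sum {n : Type*} [Fintype n] {s : Finset n}
    (hs : s.Nonempty) {f : n → ℝ} {κ : ℝ} (hκ : 0 ≤ κ) (h : κ ≤ ∑ i ∈ s, f i) :
    ∃ i ∈ s, κ / Fintype.card n ≤ f i := by
  have : Nonempty n := hs.to_type
  refine exists_le_of_sum_le hs ?_
  rw [sum_const, nsmul_eq_mul]
  calc (#s : ℝ) * (κ / Fintype.card n) ≤ Fintype.card n * (κ / Fintype.card n) := by
        gcongr
        exact_mod_cast card_le_univ s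
    _ = κ := mul_div_cancel₀ _ (Nat.cast_ne_zero.2 Fintype.card_ne_zero)
    _ ≤ _ := h

theorem Finite.ciInf_pos {ι : Type*} [Finite ι] [Nonempty ι] {f : ι → ℝ} (hf : ∀ i, 0 < f i) :
    0 < ⨅ i, f i :=
  let ⟨i, hi⟩ := exists_eq_ciInf_of_finite (f := f)
  hi ▸ hf i

theorem sq_sub_div_pos {K : ℕ} {θ : Fin K → ℝ} {Istar : Fin K}
    (hmax : ∀ j ≠ Istar, θ j < θ Istar) {σ : ℝ} (hσ : 0 < σ) {a : ℝ} (ha : 0 < a)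
    (x : {x : Fin K // x ≠ Istar}) : 0 < (θ Istar - θ x.1) ^ 2 / (a * σ ^ 2) := by
  have := sub_pos.2 (hmax x.1 x.2)
  positivity

theorem four_mul_ciInf_le {K : ℕ} (θ : Fin K → ℝ) (Istar : Fin K) (σ : ℝ)
    (x : {x : Fin K // x ≠ Istar}) :
    4 * ⨅ y : {x : Fin K // x ≠ Istar}, (θ Istar - θ y.1) ^ 2 / (8 * σ ^ 2) ≤
      (θ Istar - θ x.1) ^ 2 / (2 * σ ^ 2) := by
  have := ciInf_le (Set.finite_range
    fun y : {x : Fin K // x ≠ Istar} => (θ Istar - θ y.1) ^ 2 / (8 * σ ^ 2)).bddBelow x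
  field_simp at this ⊢
  linarith

/-- zero-coordinate dominance in Gaussian BAI. With
`κ_x = (θ_{I*}−θ_x)²/(8σ²)`, `κ_min = min_x κ_x`, `M = max_x (θ_{I*}−θ_x)²/(2σ²)` and
`ε₀ = min{1/2, κ_min/(4KM)}`, if `p ∈ Δ_K` has nonempty zero-information set
`Z = {x : p_{I*} p_x = 0}` and `μ ∈ Δ_X` puts mass at most `ε₀` outside `Z`, then every
`f = ∑_x μ_x g^{(x)}` with `g^{(x)} ∈ ∂°D(·,x)(p)` satisfies
`max_{i : p_i = 0} f_i ≥ κ_min/(2K)`, `max_{i : p_i > 0} f_i ≤ ε₀ M ≤ κ_min/(4K)`, and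
every maximizer of `f` has `p_i = 0`. -/
theorem stmt_10 {K : ℕ} (θ : Fin K → ℝ) (Istar : Fin K)
    (hmax : ∀ j ≠ Istar, θ j < θ Istar) (σ : ℝ) (hσ : 0 < σ)
    (κmin M ε₀ : ℝ)
    (hκ : κmin = ⨅ x : {x : Fin K // x ≠ Istar}, (θ Istar - θ x.1) ^ 2 / (8 * σ ^ 2))
    (hM : M = ⨆ x : {x : Fin K // x ≠ Istar}, (θ Istar - θ x.1) ^ 2 / (2 * σ ^ 2))
    (hε₀ : ε₀ = min (1 / 2) (κmin / (4 * K * M)))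
    (p : Fin K → ℝ) (hp : p ∈ stdSimplex ℝ (Fin K))
    (hZ : ∃ x : {x : Fin K // x ≠ Istar}, p Istar * p x.1 = 0)
    (μ : {x : Fin K // x ≠ Istar} → ℝ) (hμ : μ ∈ stdSimplex ℝ {x : Fin K // x ≠ Istar})
    (hmass : ∑ x : {x : Fin K // x ≠ Istar},
      (if p Istar * p x.1 = 0 then 0 else μ x) ≤ ε₀)
    (g : {x : Fin K // x ≠ Istar} → (Fin K → ℝ))
    (hg : ∀ x : {x : Fin K // x ≠ Istar}, g x ∈ clarkeDg θ σ Istar x.1 p)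
    (f : Fin K → ℝ) (hf : f = fun i => ∑ x : {x : Fin K // x ≠ Istar}, μ x * g x i) :
    (∃ i, p i = 0 ∧ κmin / (2 * K) ≤ f i) ∧
    (∀ i, 0 < p i → f i ≤ ε₀ * M) ∧
    ε₀ * M ≤ κmin / (4 * K) ∧
    (∀ i, (∀ j, f j ≤ f i) → p i = 0) := by
  subst hf
  obtain ⟨x₀, hx₀⟩ := hZ
  have : Nonempty {x : Fin K // x ≠ Istar} := ⟨x₀⟩
  have hK : (0 : ℝ) < K := Nat.cast_pos.2 (Fin.pos Istar)
  have hκpos : 0 < κmin := hκ ▸ Finite.ciInf_pos (sq_sub_div_pos hmax hσ (by norm_num))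
  have hκle : ∀ x : {x : Fin K // x ≠ Istar}, 4 * κmin ≤ (θ Istar - θ x.1) ^ 2 / (2 * σ ^ 2) :=
    hκ ▸ four_mul_ciInf_le θ Istar σ
  have hMge : ∀ x : {x : Fin K // x ≠ Istar}, (θ Istar - θ x.1) ^ 2 / (2 * σ ^ 2) ≤ M := fun x =>
    hM ▸ le_ciSup (f := fun x : {x : Fin K // x ≠ Istar} => (θ Istar - θ x.1) ^ 2 / (2 * σ ^ 2))
      (Set.finite_range _).bddAbove x
  have hMpos : 0 < M := (sq_sub_div_pos hmax hσ two_pos x₀).trans_le (hMge x₀)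
  have henv := fun x : {x : Fin K // x ≠ Istar} => clarkeDg_subset_gradEnvelope x.2 p (hg x)
  have hpos : ∀ i, 0 < p i → ∑ x, μ x * g x i ≤ ε₀ * M := fun i =>
    sum_mul_apply_le_of_pos hμ.1 hmass hMpos.le (fun x i => ((henv x).1 i).2.trans (hMge x))
      (fun x hx => (henv x).2.2 hx)
  have hzero_mass : κmin ≤ ∑ i with p i = 0, ∑ x, μ x * g x i :=
    le_sum_filter_sum_mul_apply hμ hmass (hε₀ ▸ min_le_left _ _) hκpos.le hp.1
      (fun x i => ((henv x).1 i).1) (fun x hx => (henv x).2.2 hx)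
      (fun x _ => by linarith [(henv x).2.1, hκle x])
  have hZne : ({i | p i = 0} : Finset (Fin K)).Nonempty := by
    rcases mul_eq_zero.1 hx₀ with h | h <;> exact ⟨_, mem_filter.2 ⟨mem_univ _, h⟩⟩
  obtain ⟨i₀, hi₀, hfi₀⟩ := exists_div_card_le_of_le_sum hZne hκpos.le hzero_mass
  rw [Fintype.card_fin] at hfi₀
  have hεM : ε₀ * M ≤ κmin / (4 * K) :=
    calc ε₀ * M ≤ κmin / (4 * K * M) * M := by gcongr; exact hε₀ ▸ min_le_right _ _
      _ = κmin / (4 * K) := by field_simp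
  have hhalf : κmin / (2 * K) ≤ κmin / K := div_le_div_of_nonneg_left hκpos.le hK (by linarith)
  have hquarter : κmin / (4 * K) < κmin / (2 * K) := by gcongr; norm_num
  refine ⟨⟨i₀, (mem_filter.1 hi₀).2, hhalf.trans hfi₀⟩, hpos, hεM, fun i hi => ?_⟩
  by_contra hpi
  linarith [hi i₀, hpos i ((hp.1 i).lt_of_ne' hpi)]
end

section
/- Let I₀ ⊆ {1,…,K} be nonempty, t₀ ∈ ℝ, and let p : [t₀, t₀ + log 2] → Δ_K be absolutely continuous with ṗ(s) = q(s) − p(s) for almost every s, where q(s) ∈ Δ_K satisfies q_j(s) = 0 for all j ∉ I₀. If Σ_{j∈I₀} p_j(t₀) = 0, then Σ_{j∈I₀} p_j(s) = 1 − e^{−(s−t₀)} for all s ∈ [t₀, t₀+log 2]; in particular Σ_{j∈I₀} p_j(t₀ + log 2) = 1/2, and hence there exists j ∈ I₀ with p_j(t₀ + log 2) ≥ 1/(2|I₀|). -/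
/-! Summing the equation over `I₀` and using that `q(s)` carries all of its mass on `I₀` shows
that the mass `F(s) = ∑_{j∈I₀} p_j(s)` solves `F' = 1 - F` with `F(t₀) = 0`; by uniqueness for
this Lipschitz ODE, `F(s) = 1 - e^{-(s-t₀)}`, which equals `1/2` at `t₀ + log 2`. Some coordinate
is then at least the average `1/(2|I₀|)`. -/

open MeasureTheory Set Real

theorem Finset.sum_eq_one_of_mem_stdSimplex {𝕜 ι : Type*} [Semiring 𝕜] [PartialOrder 𝕜]
    [Fintype ι] {x : ι → 𝕜} (hx : x ∈ stdSimplex 𝕜 ι) {I : Finset ι} (hI : ∀ j ∉ I, x j = 0) :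
    ∑ j ∈ I, x j = 1 := by
  rw [← hx.2]
  exact Finset.sum_subset (Finset.subset_univ I) fun j _ hj => hI j hj

theorem integrable_of_ae_mem_stdSimplex {α ι : Type*} [MeasurableSpace α] {μ : Measure α}
    [IsFiniteMeasure μ] [Fintype ι] {q : α → ι → ℝ} (hq : AEStronglyMeasurable q μ)
    (hmem : ∀ᵐ s ∂μ, q s ∈ stdSimplex ℝ ι) : Integrable q μ :=
  (integrable_const (1 : ℝ)).mono' hq <| hmem.mono fun _ hs => by
    simpa using stdSimplex_subset_closedBall hs

theorem Finset.sum_apply_intervalIntegral {ι : Type*} [Fintype ι] (I : Finset ι)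
    {f : ℝ → ι → ℝ} {a b : ℝ} (hf : IntervalIntegrable f volume a b) :
    ∑ j ∈ I, (∫ u in a..b, f u) j = ∫ u in a..b, ∑ j ∈ I, f u j := by
  simpa using ((∑ j ∈ I, ContinuousLinearMap.proj (R := ℝ) (φ := fun _ : ι => ℝ) j
    ).intervalIntegral_comp_comm hf).symm

theorem hasDerivWithinAt_Ici_of_eq_add_integral {E : Type*} [NormedAddCommGroup E]
    [NormedSpace ℝ E] [CompleteSpace E] {F f : ℝ → E} {a b t : ℝ}
    (hf : ContinuousOn f (Icc a b)) (hF : ∀ s ∈ Icc a b, F s = F a + ∫ u in a..s, f u)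
    (ht : t ∈ Ico a b) : HasDerivWithinAt F (f t) (Ici t) t := by
  have hIcc : Icc a b ∈ nhdsWithin t (Ici t) := Icc_mem_nhdsGE_of_mem ht
  have hIoi : Icc a b ∈ nhdsWithin t (Ioi t) := nhdsWithin_mono t Ioi_subset_Ici_self hIcc
  have hint : IntervalIntegrable f volume a t :=
    (hf.mono (by rw [uIcc_of_le ht.1]; exact Icc_subset_Icc_right ht.2.le)).intervalIntegrable
  have hderiv := intervalIntegral.integral_hasDerivWithinAt_right (s := Ici t) hint
    ⟨Icc a b, hIoi, hf.aestronglyMeasurable measurableSet_Icc⟩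
    ((hf t (Ico_subset_Icc_self ht)).mono_of_mem_nhdsWithin hIoi)
  exact (hderiv.const_add (F a)).congr_of_eventuallyEq
    (Filter.mem_of_superset hIcc hF) (hF t (Ico_subset_Icc_self ht))

theorem eqOn_one_sub_exp_of_eq_add_integral {F : ℝ → ℝ} {a b : ℝ}
    (hF : ContinuousOn F (Icc a b))
    (hFint : ∀ s ∈ Icc a b, F s = F a + ∫ u in a..s, (1 - F u)) :
    EqOn F (fun s => 1 - (1 - F a) * exp (-(s - a))) (Icc a b) := by
  have hlip : LipschitzWith 1 (fun x : ℝ => 1 - x) := by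
    simpa using (LipschitzWith.const (1 : ℝ)).sub LipschitzWith.id
  refine ODE_solution_unique_of_mem_Icc_right (v := fun _ x => 1 - x) (s := fun _ => univ)
    (fun _ _ => hlip.lipschitzOnWith) hF
    (fun t ht => hasDerivWithinAt_Ici_of_eq_add_integral (continuousOn_const.sub hF) hFint ht)
    (fun _ _ => mem_univ _) (by fun_prop) (fun t _ => ?_) (fun _ _ => mem_univ _) (by simp)
  have hexp : HasDerivAt (fun s => exp (-(s - a))) (-exp (-(t - a))) t := by
    simpa using ((hasDerivAt_id t).sub_const a).neg.exp
  convert ((hexp.const_mul (1 - F a)).const_sub 1).hasDerivWithinAt using 1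
  ring

theorem sum_eq_add_integral_one_sub_sum {ι : Type*} [Fintype ι] (I : Finset ι)
    {p q : ℝ → ι → ℝ} {a b : ℝ} (hqmeas : AEStronglyMeasurable q (volume.restrict (Icc a b)))
    (hq : ∀ᵐ s ∂(volume.restrict (Icc a b)), q s ∈ stdSimplex ℝ ι ∧ ∀ j ∉ I, q s j = 0)
    (hpc : ContinuousOn p (Icc a b))
    (hode : ∀ s ∈ Icc a b, p s = p a + ∫ u in a..s, (q u - p u)) {s : ℝ} (hs : s ∈ Icc a b) :
    ∑ j ∈ I, p s j = ∑ j ∈ I, p a j + ∫ u in a..s, (1 - ∑ j ∈ I, p u j) := by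
  have hsub : uIcc a s ⊆ Icc a b := by rw [uIcc_of_le hs.1]; exact Icc_subset_Icc_right hs.2
  have hqint : IntegrableOn q (Icc a b) :=
    integrable_of_ae_mem_stdSimplex hqmeas (hq.mono fun _ h => h.1)
  have hint : IntervalIntegrable (fun u => q u - p u) volume a s :=
    ((hqint.mono_set hsub).intervalIntegrable).sub (hpc.mono hsub).intervalIntegrable
  calc ∑ j ∈ I, p s j = ∑ j ∈ I, (p a j + (∫ u in a..s, (q u - p u)) j) := by
        rw [hode s hs]; rfl
    _ = ∑ j ∈ I, p a j + ∫ u in a..s, ∑ j ∈ I, (q u j - p u j) := by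
        rw [Finset.sum_add_distrib, Finset.sum_apply_intervalIntegral I hint]; rfl
    _ = ∑ j ∈ I, p a j + ∫ u in a..s, (1 - ∑ j ∈ I, p u j) := by
        congr 1
        refine intervalIntegral.integral_congr_ae ?_
        filter_upwards [ae_imp_of_ae_restrict hq] with u hu hmem
        have hu' := hu (hsub (uIoc_subset_uIcc hmem))
        rw [Finset.sum_sub_distrib, Finset.sum_eq_one_of_mem_stdSimplex hu'.1 hu'.2]

theorem stmt_11_general {K : ℕ} (I₀ : Finset (Fin K)) (hI₀ : I₀.Nonempty) (t₀ : ℝ)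
    (p q : ℝ → (Fin K → ℝ))
    (hqmeas : Measurable q)
    (hq : ∀ᵐ s ∂(volume.restrict (Set.Icc t₀ (t₀ + Real.log 2))),
      q s ∈ stdSimplex ℝ (Fin K) ∧ ∀ j ∉ I₀, q s j = 0)
    (hpc : ContinuousOn p (Set.Icc t₀ (t₀ + Real.log 2)))
    (hode : ∀ s ∈ Set.Icc t₀ (t₀ + Real.log 2),
      p s = p t₀ + ∫ u in t₀..s, (q u - p u))
    (hzero : ∑ j ∈ I₀, p t₀ j = 0) :
    (∀ s ∈ Set.Icc t₀ (t₀ + Real.log 2),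
      ∑ j ∈ I₀, p s j = 1 - Real.exp (-(s - t₀))) ∧
    (∑ j ∈ I₀, p (t₀ + Real.log 2) j = 1 / 2) ∧
    (∃ j ∈ I₀, 1 / (2 * (I₀.card : ℝ)) ≤ p (t₀ + Real.log 2) j) := by
  have hmass : ∀ s ∈ Icc t₀ (t₀ + log 2), ∑ j ∈ I₀, p s j = 1 - exp (-(s - t₀)) := by
    intro s hs
    have hsol := eqOn_one_sub_exp_of_eq_add_integral (F := fun s => ∑ j ∈ I₀, p s j)
      (continuousOn_finsetSum I₀ fun j _ => (continuous_apply j).comp_continuousOn hpc)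
      (fun s hs => sum_eq_add_integral_one_sub_sum I₀ hqmeas.aestronglyMeasurable hq hpc hode hs) hs
    simpa [hzero] using hsol
  have hhalf : ∑ j ∈ I₀, p (t₀ + log 2) j = 1 / 2 := by
    rw [hmass _ (right_mem_Icc.mpr (by simp [log_nonneg one_le_two])), add_sub_cancel_left,
      exp_neg, exp_log two_pos]
    norm_num
  refine ⟨hmass, hhalf, Finset.exists_le_of_le_expect hI₀ ?_⟩
  rw [Finset.expect_eq_sum_div_card, hhalf, div_div]

/-- activation of zero coordinates. If `p : [t₀, t₀+log 2] → Δ_K` is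
absolutely continuous (encoded in integral form) with `ṗ(s) = q(s) − p(s)` a.e., where
`q(s) ∈ Δ_K` is supported on `I₀`, and the total mass of `I₀` at time `t₀` is `0`, then
`∑_{j∈I₀} p_j(s) = 1 − e^{−(s−t₀)}` on the interval; in particular the mass at time
`t₀ + log 2` is `1/2`, so some `j ∈ I₀` has `p_j(t₀+log 2) ≥ 1/(2|I₀|)`. -/
theorem stmt_11 {K : ℕ} (I₀ : Finset (Fin K)) (hI₀ : I₀.Nonempty) (t₀ : ℝ)
    (p q : ℝ → (Fin K → ℝ))
    (hmem : ∀ s ∈ Set.Icc t₀ (t₀ + Real.log 2), p s ∈ stdSimplex ℝ (Fin K))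
    (hqmeas : Measurable q)
    (hq : ∀ᵐ s ∂(volume.restrict (Set.Icc t₀ (t₀ + Real.log 2))),
      q s ∈ stdSimplex ℝ (Fin K) ∧ ∀ j ∉ I₀, q s j = 0)
    (hpc : ContinuousOn p (Set.Icc t₀ (t₀ + Real.log 2)))
    (hode : ∀ s ∈ Set.Icc t₀ (t₀ + Real.log 2),
      p s = p t₀ + ∫ u in t₀..s, (q u - p u))
    (hzero : ∑ j ∈ I₀, p t₀ j = 0) :
    (∀ s ∈ Set.Icc t₀ (t₀ + Real.log 2),
      ∑ j ∈ I₀, p s j = 1 - Real.exp (-(s - t₀))) ∧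
    (∑ j ∈ I₀, p (t₀ + Real.log 2) j = 1 / 2) ∧
    (∃ j ∈ I₀, 1 / (2 * (I₀.card : ℝ)) ≤ p (t₀ + Real.log 2) j) :=
  stmt_11_general I₀ hI₀ t₀ p q hqmeas hq hpc hode hzero
end

section
/- The function g(p) = p₂(p₁ + 4p₃)/(p₁ + p₂ + 4p₃) on the simplex Δ₃ (note the denominator equals 1 + 3p₃ > 0 on Δ₃) attains its maximum value 4/9, and p* = (0, 2/3, 1/3) is its unique maximizer; equivalently, the best-arm-identification maximin value (1/2)·max_{p∈Δ₃} g(p) equals 2/9. -/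
/-! Homogenising with `p₁ + p₂ + p₃ = 1`, the slack `4/9 - g(p)` becomes the quadratic form
`(2p₂ - 4p₃ - p₁)² + 3p₁(p₁ + p₂ + 4p₃)` divided by `9(p₁ + p₂ + 4p₃)`. Both summands are
nonnegative on the simplex, and they vanish together exactly when `p₁ = 0` and `p₂ = 2p₃`,
i.e. at `p = (0, 2/3, 1/3)`. -/

open Set

noncomputable def maximinRatio (p : Fin 3 → ℝ) : ℝ :=
  p 1 * (p 0 + 4 * p 2) / (p 0 + p 1 + 4 * p 2)

theorem mem_stdSimplex_fin_three_iff {p : Fin 3 → ℝ} :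
    p ∈ stdSimplex ℝ (Fin 3) ↔ 0 ≤ p 0 ∧ 0 ≤ p 1 ∧ 0 ≤ p 2 ∧ p 0 + p 1 + p 2 = 1 := by
  simp only [stdSimplex, mem_ofPred_eq, Fin.forall_fin_succ, Fin.sum_univ_three,
    IsEmpty.forall_iff, and_true, and_assoc]
  rfl

theorem four_mul_sub_nine_mul_eq_sq_add_mul {R : Type*} [CommRing R] (a b c : R) :
    4 * (a + b + 4 * c) * (a + b + c) - 9 * (b * (a + 4 * c)) =
      (2 * b - 4 * c - a) ^ 2 + 3 * a * (a + b + 4 * c) := by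
  ring

section
variable {p : Fin 3 → ℝ} (hp : p ∈ stdSimplex ℝ (Fin 3))
include hp

theorem maximinRatio_denom_pos : 0 < p 0 + p 1 + 4 * p 2 := by
  obtain ⟨-, -, h2, hsum⟩ := mem_stdSimplex_fin_three_iff.mp hp
  linarith

theorem four_ninths_sub_maximinRatio :
    4 / 9 - maximinRatio p =
      ((2 * p 1 - 4 * p 2 - p 0) ^ 2 + 3 * p 0 * (p 0 + p 1 + 4 * p 2)) /
        (9 * (p 0 + p 1 + 4 * p 2)) := by
  have hsum := (mem_stdSimplex_fin_three_iff.mp hp).2.2.2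
  have hD := (maximinRatio_denom_pos hp).ne'
  rw [← four_mul_sub_nine_mul_eq_sq_add_mul, hsum, maximinRatio]
  field_simp

theorem maximinRatio_le : maximinRatio p ≤ 4 / 9 := by
  have h0 := (mem_stdSimplex_fin_three_iff.mp hp).1
  have hD := maximinRatio_denom_pos hp
  have : 0 ≤ 4 / 9 - maximinRatio p := by
    rw [four_ninths_sub_maximinRatio hp]
    positivity
  linarith

theorem maximinRatio_eq_four_ninths_iff :
    maximinRatio p = 4 / 9 ↔ p = ![0, 2 / 3, 1 / 3] := by
  obtain ⟨h0, h1, h2, hsum⟩ := mem_stdSimplex_fin_three_iff.mp hp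
  have hD := maximinRatio_denom_pos hp
  constructor
  · intro heq
    have hzero : (2 * p 1 - 4 * p 2 - p 0) ^ 2 + 3 * p 0 * (p 0 + p 1 + 4 * p 2) = 0 := by
      have := four_ninths_sub_maximinRatio hp
      rw [heq, sub_self, eq_comm, div_eq_zero_iff] at this
      exact this.resolve_right (by positivity)
    have hp0 : p 0 = 0 := by nlinarith [sq_nonneg (2 * p 1 - 4 * p 2 - p 0)]
    have hbal : 2 * p 1 - 4 * p 2 = 0 := by simpa [hp0] using hzero
    ext i
    fin_cases i <;> simp <;> linarith
  · rintro rfl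
    norm_num [maximinRatio, Matrix.cons_val_two]

end

theorem maximizer_mem_stdSimplex : ![(0 : ℝ), 2 / 3, 1 / 3] ∈ stdSimplex ℝ (Fin 3) := by
  rw [mem_stdSimplex_fin_three_iff]
  norm_num [Matrix.cons_val_two]

theorem isGreatest_maximinRatio_image :
    IsGreatest (maximinRatio '' stdSimplex ℝ (Fin 3)) (4 / 9) := by
  have hmem := maximizer_mem_stdSimplex
  refine ⟨⟨_, hmem, (maximinRatio_eq_four_ninths_iff hmem).mpr rfl⟩, ?_⟩
  rintro _ ⟨p, hp, rfl⟩
  exact maximinRatio_le hp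

/-- the function `g(p) = p₂(p₁ + 4p₃)/(p₁ + p₂ + 4p₃)` on the simplex
`Δ₃` attains its maximum value `4/9`, with unique maximizer `p* = (0, 2/3, 1/3)`;
equivalently, the best-arm-identification maximin value `(1/2)·max_{p∈Δ₃} g(p)`
equals `2/9`. -/
theorem stmt_19
    (g : (Fin 3 → ℝ) → ℝ)
    (hg : ∀ p, g p = p 1 * (p 0 + 4 * p 2) / (p 0 + p 1 + 4 * p 2))
    (pstar : Fin 3 → ℝ) (hps : pstar = ![0, 2 / 3, 1 / 3]) :
    pstar ∈ stdSimplex ℝ (Fin 3) ∧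
    g pstar = 4 / 9 ∧
    (∀ p ∈ stdSimplex ℝ (Fin 3), g p ≤ 4 / 9) ∧
    (∀ p ∈ stdSimplex ℝ (Fin 3), g p = 4 / 9 → p = pstar) ∧
    (1 / 2) * (⨆ p : stdSimplex ℝ (Fin 3), g p.1) = 2 / 9 := by
  obtain rfl : g = maximinRatio := funext hg
  have hpstar : pstar ∈ stdSimplex ℝ (Fin 3) := hps ▸ maximizer_mem_stdSimplex
  have hsup : (⨆ p : stdSimplex ℝ (Fin 3), maximinRatio p.1) = 4 / 9 := by
    rw [iSup, ← image_eq_range]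
    exact isGreatest_maximinRatio_image.csSup_eq
  refine ⟨hpstar, (maximinRatio_eq_four_ninths_iff hpstar).mpr hps, fun p hp => maximinRatio_le hp,
    fun p hp h => hps ▸ (maximinRatio_eq_four_ninths_iff hp).mp h, ?_⟩
  rw [hsup]
  norm_num
end
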